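/- arXiv:1906.11699 — 10 statements merged into one kernel-verified Lean document; each statement's English description precedes it below -/
import Mathlib

section
/- Let p, q, r, s be nonnegative real numbers with p > r and s·p − r·q ≤ p − r. Then for every ε > 0 there exist positive constants A₁ and A₂ (depending only on ε and p, q, r, s) such that u^s · v^r ≤ ε·u^q·v^p + A₁·u + A₂ for all real numbers u ≥ 1 and v ≥ 0. -/
/-- Lemma 3.1 of the paper (condition (H1)-(i)): for `p > r ≥ 0`, `q, s ≥ 0` with
`s·p − r·q ≤ p − r`, for every `ε > 0` there are positive constants `A₁, A₂` such that
`u^s · v^r ≤ ε·u^q·v^p + A₁·u + A₂` for all `u ≥ 1`, `v ≥ 0`. -/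
theorem stmt0 (p q r s : ℝ) (hp : 0 ≤ p) (hq : 0 ≤ q) (hr : 0 ≤ r) (hs : 0 ≤ s)
    (hrp : r < p) (hcond : s * p - r * q ≤ p - r) :
    ∀ ε > (0 : ℝ), ∃ A₁ A₂ : ℝ, 0 < A₁ ∧ 0 < A₂ ∧
      ∀ u v : ℝ, 1 ≤ u → 0 ≤ v →
        u ^ s * v ^ r ≤ ε * (u ^ q * v ^ p) + A₁ * u + A₂ := by
  intro ε hε
  rcases eq_or_lt_of_le hr with hr0 | hr0
  · -- r = 0
    have hp0 : 0 < p := by linarith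
    refine ⟨1, 1, one_pos, one_pos, fun u v hu hv => ?_⟩
    have hu0 : 0 < u := lt_of_lt_of_le one_pos hu
    have hs1 : s ≤ 1 := by
      nlinarith
    have h1 : u ^ s ≤ u := by
      calc u ^ s ≤ u ^ (1:ℝ) := Real.rpow_le_rpow_of_exponent_le hu hs1
        _ = u := Real.rpow_one u
    have h2 : 0 ≤ ε * (u ^ q * v ^ p) := by positivity
    rw [← hr0, Real.rpow_zero]
    nlinarith
  · -- r > 0
    have hp0 : 0 < p := lt_trans hr0 hrp
    have hpr : 0 < p - r := sub_pos.mpr hrp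
    set c := ε * p / r with hc_def
    have hc : 0 < c := by positivity
    set E := (s * p - r * q) / (p - r) with hE_def
    set d := c ^ (-(r / (p - r))) with hd_def
    have hd : 0 < d := Real.rpow_pos_of_pos hc _
    refine ⟨(p - r) / p * d, 1, by positivity, one_pos, fun u v hu hv => ?_⟩
    have hu0 : 0 < u := lt_of_lt_of_le one_pos hu
    have h1 : (c * (u ^ q * v ^ p)) ^ (r / p) = c ^ (r / p) * (u ^ (q * (r / p)) * v ^ r) := by
      rw [Real.mul_rpow hc.le (by positivity), Real.mul_rpow (by positivity) (by positivity),
        ← Real.rpow_mul hu0.le, ← Real.rpow_mul hv]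
      congr 2
      field_simp
    have h2 : (d * u ^ E) ^ ((p - r) / p) = c ^ (-(r / p)) * u ^ (s - q * (r / p)) := by
      rw [Real.mul_rpow hd.le (by positivity), hd_def, ← Real.rpow_mul hc.le,
        ← Real.rpow_mul hu0.le]
      congr 2
      · field_simp
      · rw [hE_def]
        field_simp
    have key : u ^ s * v ^ r = (c * (u ^ q * v ^ p)) ^ (r / p) * (d * u ^ E) ^ ((p - r) / p) := by
      rw [h1, h2]
      have : c ^ (r / p) * (u ^ (q * (r / p)) * v ^ r) * (c ^ (-(r / p)) * u ^ (s - q * (r / p)))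
          = (c ^ (r / p) * c ^ (-(r / p))) * (u ^ (q * (r / p)) * u ^ (s - q * (r / p))) * v ^ r := by
        ring
      rw [this, ← Real.rpow_add hc, ← Real.rpow_add hu0]
      norm_num
    have huE : u ^ E ≤ u := by
      have hE1 : E ≤ 1 := by
        rw [hE_def, div_le_one hpr]; linarith
      calc u ^ E ≤ u ^ (1:ℝ) := Real.rpow_le_rpow_of_exponent_le hu hE1
        _ = u := Real.rpow_one u
    have hgm := Real.geom_mean_le_arith_mean2_weighted
      (w₁ := r / p) (w₂ := (p - r) / p) (p₁ := c * (u ^ q * v ^ p)) (p₂ := d * u ^ E)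
      (by positivity) (by positivity) (by positivity) (by positivity) (by field_simp; ring)
    have heq : r / p * (c * (u ^ q * v ^ p)) = ε * (u ^ q * v ^ p) := by
      rw [hc_def]; field_simp
    have hfin : (p - r) / p * (d * u ^ E) ≤ (p - r) / p * d * u := by
      have h3 : 0 ≤ (p - r) / p * d := by positivity
      calc (p - r) / p * (d * u ^ E) = (p - r) / p * d * u ^ E := by ring
        _ ≤ (p - r) / p * d * u := by
            exact mul_le_mul_of_nonneg_left huE h3
    calc u ^ s * v ^ r = (c * (u ^ q * v ^ p)) ^ (r / p) * (d * u ^ E) ^ ((p - r) / p) := key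
      _ ≤ r / p * (c * (u ^ q * v ^ p)) + (p - r) / p * (d * u ^ E) := hgm
      _ ≤ ε * (u ^ q * v ^ p) + (p - r) / p * d * u + 1 := by
          rw [heq]; linarith
end

section
/- Let p, q, r, s be real numbers with 0 ≤ p < 1, 0 ≤ s < q, r ≥ 0, and p·s − q·r ≥ s − q. Let a > 1 and set b = (1−p)(a−1)/q + 1. Then for every ε > 0 there exists a constant A > 0 (depending only on ε and the exponents) such that u^q·v^{p+b−1} ≤ ε·u^{q+a−1}·v^p + A·v^b for all real numbers u, v ≥ 0. -/
/-- Inequality (bbb) of Lemma 3.6 of the paper (condition (H2)-(i)): with `0 ≤ p < 1`,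
`0 ≤ s < q`, `r ≥ 0`, `p·s − q·r ≥ s − q`, `a > 1` and `b = (1−p)(a−1)/q + 1`, for every
`ε > 0` there is `A > 0` such that
`u^q·v^{p+b−1} ≤ ε·u^{q+a−1}·v^p + A·v^b` for all `u, v ≥ 0`. -/
theorem stmt3 (p q r s a b : ℝ) (hp0 : 0 ≤ p) (hp1 : p < 1) (hs : 0 ≤ s) (hsq : s < q)
    (hr : 0 ≤ r) (hcond : s - q ≤ p * s - q * r) (ha : 1 < a)
    (hb : b = (1 - p) * (a - 1) / q + 1) :
    ∀ ε > (0 : ℝ), ∃ A : ℝ, 0 < A ∧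
      ∀ u v : ℝ, 0 ≤ u → 0 ≤ v →
        u ^ q * v ^ (p + b - 1) ≤ ε * (u ^ (q + a - 1) * v ^ p) + A * v ^ b := by
  intro ε hε
  have hq : 0 < q := lt_of_le_of_lt hs hsq
  have hqa : 0 < q + a - 1 := by linarith
  set l : ℝ := q / (q + a - 1) with hl
  have hl0 : 0 < l := div_pos hq hqa
  have hl1 : l < 1 := (div_lt_one hqa).2 (by linarith)
  set t : ℝ := ε / l with ht
  have ht0 : 0 < t := div_pos hε hl0
  have hlt : l * t = ε := by rw [ht]; field_simp [hl0.ne']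
  have hb1 : 1 < b := by
    rw [hb]
    have : 0 < (1 - p) * (a - 1) / q := div_pos (mul_pos (by linarith) (by linarith)) hq
    linarith
  refine ⟨(1 - l) * t ^ (-(l / (1 - l))), mul_pos (by linarith) (Real.rpow_pos_of_pos ht0 _), ?_⟩
  intro u v hu hv
  rcases hu.eq_or_lt with h | hu'
  · rw [← h, Real.zero_rpow hq.ne', zero_mul]
    exact add_nonneg (by positivity)
      (mul_nonneg (mul_nonneg (by linarith) (Real.rpow_pos_of_pos ht0 _).le)
        (Real.rpow_nonneg hv _))
  rcases hv.eq_or_lt with h | hv'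
  · rw [← h, Real.zero_rpow (ne_of_gt (by linarith : (0:ℝ) < p + b - 1)), mul_zero]
    exact add_nonneg (by positivity)
      (mul_nonneg (mul_nonneg (by linarith) (Real.rpow_pos_of_pos ht0 _).le)
        (Real.rpow_nonneg le_rfl _))
  -- main case: u, v > 0
  have e1 : (q + a - 1) * l = q := by rw [hl]; field_simp
  have e2 : p * l + b * (1 - l) = p + b - 1 := by
    rw [hb, hl]; field_simp; ring
  have h1l : (1:ℝ) - l ≠ 0 := by linarith
  have e3 : -(l / (1 - l)) * (1 - l) = -l := by
    field_simp
  have key := Real.geom_mean_le_arith_mean2_weighted (w₁ := l) (w₂ := 1 - l)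
    (p₁ := t * (u ^ (q + a - 1) * v ^ p)) (p₂ := t ^ (-(l / (1 - l))) * v ^ b)
    hl0.le (by linarith) (by positivity) (by positivity) (by ring)
  have hX : (t * (u ^ (q + a - 1) * v ^ p)) ^ l * (t ^ (-(l / (1 - l))) * v ^ b) ^ (1 - l)
      = u ^ q * v ^ (p + b - 1) := by
    rw [Real.mul_rpow ht0.le (by positivity), Real.mul_rpow (by positivity) (by positivity),
      Real.mul_rpow (by positivity) (by positivity),
      ← Real.rpow_mul hu'.le, ← Real.rpow_mul hv'.le,
      ← Real.rpow_mul ht0.le, ← Real.rpow_mul hv'.le, e1, e3]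
    calc t ^ l * (u ^ q * v ^ (p * l)) * (t ^ (-l) * v ^ (b * (1 - l)))
        = (t ^ l * t ^ (-l)) * u ^ q * (v ^ (p * l) * v ^ (b * (1 - l))) := by ring
      _ = u ^ q * v ^ (p + b - 1) := by
          rw [← Real.rpow_add ht0, ← Real.rpow_add hv', e2]
          simp
  rw [hX] at key
  calc u ^ q * v ^ (p + b - 1)
      ≤ l * (t * (u ^ (q + a - 1) * v ^ p)) + (1 - l) * (t ^ (-(l / (1 - l))) * v ^ b) := key
    _ = ε * (u ^ (q + a - 1) * v ^ p) + (1 - l) * t ^ (-(l / (1 - l))) * v ^ b := by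
        rw [← mul_assoc, hlt]; ring
end

section
/- Let a ≥ 0 and b > 0 be constants. Let φ, ψ : [a,∞) → ℝ be continuously differentiable functions and g : [a,∞) → ℝ be a nonnegative continuous function with ∫_a^∞ g(t) dt < ∞. Assume that φ is bounded from below on [a,∞), that ψ(t) ≥ 0 for all t ≥ a, that there is a constant K such that ψ'(t) ≤ K for all t ≥ a, and that φ'(t) ≤ −b·ψ(t) + g(t) for all t ≥ a. Then ψ(t) → 0 as t → ∞. -/
open Filter Topology

/-- Lemma 5.1 of the paper (Barbalat-type lemma, C¹ version): if `φ, ψ` are `C¹` on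
`[a,∞)`, `φ` is bounded below, `ψ ≥ 0`, `ψ' ≤ K`, `g ≥ 0` is continuous with
`∫_a^∞ g < ∞`, and `φ' ≤ −b·ψ + g` on `[a,∞)` with `b > 0`, then `ψ(t) → 0` as
`t → ∞`. -/
theorem stmt4 (a b K : ℝ) (ha : 0 ≤ a) (hb : 0 < b)
    (φ ψ g φ' ψ' : ℝ → ℝ)
    (hφ : ∀ t ∈ Set.Ici a, HasDerivAt φ (φ' t) t)
    (hψ : ∀ t ∈ Set.Ici a, HasDerivAt ψ (ψ' t) t)
    (hφ'cont : ContinuousOn φ' (Set.Ici a))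
    (hψ'cont : ContinuousOn ψ' (Set.Ici a))
    (hgcont : ContinuousOn g (Set.Ici a))
    (hg0 : ∀ t ∈ Set.Ici a, 0 ≤ g t)
    (hgint : MeasureTheory.IntegrableOn g (Set.Ici a))
    (hφbd : ∃ m : ℝ, ∀ t ∈ Set.Ici a, m ≤ φ t)
    (hψ0 : ∀ t ∈ Set.Ici a, 0 ≤ ψ t)
    (hψ'K : ∀ t ∈ Set.Ici a, ψ' t ≤ K)
    (hineq : ∀ t ∈ Set.Ici a, φ' t ≤ -b * ψ t + g t) :
    Tendsto ψ atTop (𝓝 0) := by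
  obtain ⟨m, hm⟩ := hφbd
  have hψc : ContinuousOn ψ (Set.Ici a) := fun t ht =>
    (hψ t ht).continuousAt.continuousWithinAt
  -- FTC helper
  have key : ∀ (f f' : ℝ → ℝ), (∀ u ∈ Set.Ici a, HasDerivAt f (f' u) u) →
      ContinuousOn f' (Set.Ici a) → ∀ s t : ℝ, a ≤ s → s ≤ t →
      ∫ u in s..t, f' u = f t - f s := by
    intro f f' hd hc s t hs hst
    apply intervalIntegral.integral_eq_sub_of_hasDerivAt
    · intro x hx
      rw [Set.uIcc_of_le hst] at hx
      exact hd x (le_trans hs hx.1)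
    · apply ContinuousOn.intervalIntegrable
      apply hc.mono
      rw [Set.uIcc_of_le hst]
      exact fun x hx => le_trans hs hx.1
  -- interval integrability of continuous functions on [a, ∞)
  have hii : ∀ (f : ℝ → ℝ), ContinuousOn f (Set.Ici a) → ∀ s t : ℝ, a ≤ s → a ≤ t →
      IntervalIntegrable f MeasureTheory.volume s t := by
    intro f hf s t hs ht
    apply ContinuousOn.intervalIntegrable (hf.mono ?_)
    intro x hx
    exact le_trans (le_min hs ht) hx.1
  have hgint' : MeasureTheory.IntegrableOn g (Set.Ioi a) :=
    hgint.mono_set Set.Ioi_subset_Ici_self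
  set G : ℝ := ∫ t in Set.Ioi a, g t with hG
  -- bound on ∫ a..t ψ
  have hbound : ∀ t : ℝ, a ≤ t → ∫ u in a..t, ψ u ≤ (G + φ a - m) / b := by
    intro t ht
    have h1 : ∫ u in a..t, b * ψ u ≤ ∫ u in a..t, (g u - φ' u) := by
      apply intervalIntegral.integral_mono_on ht
      · exact hii _ (continuousOn_const.mul hψc) a t le_rfl ht
      · exact hii _ (hgcont.sub hφ'cont) a t le_rfl ht
      · intro x hx
        have := hineq x hx.1
        linarith
    have h2 : ∫ u in a..t, (g u - φ' u) = (∫ u in a..t, g u) - (φ t - φ a) := by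
      rw [intervalIntegral.integral_sub (hii _ hgcont a t le_rfl ht)
        (hii _ hφ'cont a t le_rfl ht), key φ φ' hφ hφ'cont a t le_rfl ht]
    have h3 : ∫ u in a..t, g u ≤ G := by
      rw [intervalIntegral.integral_of_le ht]
      apply MeasureTheory.setIntegral_mono_set hgint'
      · exact (MeasureTheory.ae_restrict_iff' measurableSet_Ioi).2
          (MeasureTheory.ae_of_all _ (fun x hx => hg0 x (Set.mem_Ici.2 (le_of_lt (Set.mem_Ioi.1 hx)))))
      · exact MeasureTheory.ae_of_all _ (fun x hx => hx.1)
    have h4 : ∫ u in a..t, b * ψ u = b * ∫ u in a..t, ψ u := by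
      rw [intervalIntegral.integral_const_mul]
    have h5 := hm t ht
    rw [le_div_iff₀ hb]
    nlinarith [h1, h2, h3, h4, h5]
  -- ψ is integrable on (a, ∞)
  have hψint : MeasureTheory.IntegrableOn ψ (Set.Ioi a) := by
    apply MeasureTheory.integrableOn_Ioi_of_intervalIntegral_norm_bounded
      ((G + φ a - m) / b) a (f := ψ) (b := fun i : ℝ => i) (l := atTop) ?_ tendsto_id
    · filter_upwards [eventually_ge_atTop a] with i hi
      have : ∀ u ∈ Set.uIcc a i, ‖ψ u‖ = ψ u := by
        intro u hu
        rw [Set.uIcc_of_le hi] at hu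
        exact Real.norm_of_nonneg (hψ0 u hu.1)
      rw [intervalIntegral.integral_congr this]
      exact hbound i hi
    · intro i
      rcases le_or_gt a i with h | h
      · exact ((hii _ hψc a i le_rfl h).1).mono_set (by simp)
      · rw [Set.Ioc_eq_empty (not_lt.2 h.le)]
        exact MeasureTheory.integrableOn_empty
  set L : ℝ := ∫ u in Set.Ioi a, ψ u with hL
  have hF : Tendsto (fun t => ∫ u in a..t, ψ u) atTop (𝓝 L) :=
    MeasureTheory.intervalIntegral_tendsto_integral_Ioi a hψint tendsto_id
  -- suppose ψ does not tend to 0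
  by_contra hcon
  rw [Metric.tendsto_atTop] at hcon
  push_neg at hcon
  obtain ⟨ε, hε, hfreq⟩ := hcon
  set K' : ℝ := max K 1 with hK'def
  have hK' : 0 < K' := lt_of_lt_of_le one_pos (le_max_right _ _)
  set δ : ℝ := ε / (2 * K') with hδdef
  have hδ : 0 < δ := div_pos hε (by positivity)
  have hK'δ : K' * δ = ε / 2 := by
    field_simp [hδdef]
    rw [hδdef]; field_simp [hK'.ne']
  -- the sliding integral tends to 0
  have hsub : Tendsto (fun t : ℝ => t - δ) atTop atTop :=
    tendsto_atTop_add_const_right atTop (-δ) tendsto_id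
  have h1 : Tendsto (fun t => (∫ u in a..t, ψ u) - ∫ u in a..(t - δ), ψ u)
      atTop (𝓝 (L - L)) := hF.sub (hF.comp hsub)
  rw [sub_self] at h1
  have h2 : ∀ᶠ t in atTop, (∫ u in a..t, ψ u) - (∫ u in a..(t - δ), ψ u) < δ * (ε / 2) :=
    h1.eventually_lt_const (by positivity)
  obtain ⟨N0, hN0⟩ := eventually_atTop.1 h2
  obtain ⟨t, htN, htε⟩ := hfreq (max N0 (a + δ))
  have htδ : a + δ ≤ t := le_trans (le_max_right _ _) htN
  have hta : a ≤ t := by linarith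
  have htδa : a ≤ t - δ := by linarith
  have hψtε : ε ≤ ψ t := by
    have := htε
    rw [Real.dist_eq, sub_zero, abs_of_nonneg (hψ0 t hta)] at this
    exact this
  -- lower bound ψ on [t - δ, t]
  have hlow : ∀ s ∈ Set.Icc (t - δ) t, ε / 2 ≤ ψ s := by
    intro s hs
    have hsa : a ≤ s := le_trans htδa hs.1
    have hst : s ≤ t := hs.2
    have heq : ∫ u in s..t, ψ' u = ψ t - ψ s := key ψ ψ' hψ hψ'cont s t hsa hst
    have hmono : ∫ u in s..t, ψ' u ≤ ∫ u in s..t, (K' : ℝ) := by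
      apply intervalIntegral.integral_mono_on hst
      · exact hii _ hψ'cont s t hsa (le_trans hsa hst)
      · exact intervalIntegrable_const
      · intro x hx
        exact le_trans (hψ'K x (le_trans hsa hx.1)) (le_max_left _ _)
    rw [intervalIntegral.integral_const, smul_eq_mul] at hmono
    have hts : (t - s) * K' ≤ δ * K' := by
      apply mul_le_mul_of_nonneg_right _ hK'.le
      have := hs.1
      linarith
    have : ψ t - ψ s ≤ ε / 2 := by
      rw [← heq]
      calc ∫ u in s..t, ψ' u ≤ (t - s) * K' := hmono
        _ ≤ δ * K' := hts
        _ = ε / 2 := by rw [mul_comm]; exact hK'δ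
    linarith
  -- lower bound the integral over [t - δ, t]
  have hint_low : δ * (ε / 2) ≤ ∫ u in (t - δ)..t, ψ u := by
    have h := intervalIntegral.integral_mono_on (by linarith : t - δ ≤ t)
      (intervalIntegrable_const (c := ε / 2)) (hii _ hψc (t - δ) t htδa hta) hlow
    rw [intervalIntegral.integral_const, smul_eq_mul] at h
    calc δ * (ε / 2) = (t - (t - δ)) * (ε / 2) := by ring_nf
      _ ≤ ∫ u in (t - δ)..t, ψ u := h
  have hsplit : (∫ u in a..(t - δ), ψ u) + ∫ u in (t - δ)..t, ψ u = ∫ u in a..t, ψ u :=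
    intervalIntegral.integral_add_adjacent_intervals
      (hii _ hψc a (t - δ) le_rfl htδa) (hii _ hψc (t - δ) t htδa hta)
  have hcontra := hN0 t (le_trans (le_max_left _ _) htN)
  nlinarith [hint_low, hsplit, hcontra]
end

section
/- Suppose μ·p·S₀^{1−q} = (1−q)·β·I₀^p. Then S(t) → 0 and I(t) → 0 as t → ∞. -/
/-!
Along solutions, `Φ = (1 - q) β I^p - μ p S^(1-q)` has derivative `(1 - q) p β² S^q I^(2p-1) ≥ 0`,
so the equality `Φ(0) = 0` gives `Φ ≥ 0`, i.e. `μ p S ≤ (1 - q) β S^q I^p`. Hence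
`S' ≤ -(μ p / (1 - q)) S` and `S` decays exponentially. Since `(S + I)' = -μ I ≤ 0`, `I` is
bounded, so the incidence `β S^q I^p` tends to `0`, and `I' ≤ β S^q I^p - μ I` forces `I → 0` by
comparison with a linear equation.
-/

open Filter Topology Set Real

theorem antitoneOn_Ici_of_hasDerivAt_nonpos {f f' : ℝ → ℝ} {a : ℝ}
    (hf : ContinuousOn f (Ici a)) (hderiv : ∀ x, a < x → HasDerivAt f (f' x) x)
    (hnonpos : ∀ x, a < x → f' x ≤ 0) : AntitoneOn f (Ici a) :=
  antitoneOn_of_hasDerivWithinAt_nonpos (convex_Ici a) hf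
    (fun x hx => (hderiv x (by rwa [interior_Ici] at hx)).hasDerivWithinAt)
    (fun x hx => hnonpos x (by rwa [interior_Ici] at hx))

/-- `(f t - m) e^{k t}` is antitone, so `f t - m` is at most of order `e^{-k t}`. -/
theorem eventually_lt_of_hasDerivAt_le_mul_sub {f f' : ℝ → ℝ} {a k m m' : ℝ} (hk : 0 < k)
    (hm : m < m') (hf : ContinuousOn f (Ici a)) (hderiv : ∀ x, a < x → HasDerivAt f (f' x) x)
    (hle : ∀ x, a < x → f' x ≤ k * (m - f x)) : ∀ᶠ t in atTop, f t < m' := by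
  have hanti : AntitoneOn (fun t => (f t - m) * exp (k * t)) (Ici a) := by
    refine antitoneOn_Ici_of_hasDerivAt_nonpos (by fun_prop)
      (fun x hx => ((hderiv x hx).sub_const m).mul ((hasDerivAt_id x).const_mul k).exp)
      fun x hx => ?_
    simp only [id, mul_one]
    nlinarith [mul_le_mul_of_nonneg_right (hle x hx) (exp_pos (k * x)).le]
  have htail : Tendsto (fun t => (f a - m) * exp (k * a) * exp (-(k * t))) atTop (𝓝 0) := by
    simpa using (tendsto_exp_neg_atTop_nhds_zero.comp
      (tendsto_id.const_mul_atTop hk)).const_mul ((f a - m) * exp (k * a))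
  filter_upwards [htail.eventually_lt_const (sub_pos.2 hm), eventually_ge_atTop a] with t ht hat
  calc f t = m + (f t - m) * exp (k * t) * exp (-(k * t)) := by
        rw [mul_assoc, ← exp_add, add_neg_cancel, exp_zero, mul_one, add_sub_cancel]
    _ ≤ m + (f a - m) * exp (k * a) * exp (-(k * t)) := by
        gcongr m + ?_ * _
        exact hanti self_mem_Ici hat hat
    _ < m' := by linarith

theorem tendsto_zero_of_hasDerivAt_le_sub_mul {f f' g : ℝ → ℝ} {a k : ℝ} (hk : 0 < k)
    (hf : ContinuousOn f (Ici a)) (hderiv : ∀ x, a < x → HasDerivAt f (f' x) x)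
    (hle : ∀ x, a < x → f' x ≤ g x - k * f x) (hg : Tendsto g atTop (𝓝 0))
    (hnonneg : ∀ᶠ t in atTop, 0 ≤ f t) : Tendsto f atTop (𝓝 0) := by
  refine tendsto_order.2 ⟨fun b hb => hnonneg.mono fun t ht => hb.trans_le ht, fun ε hε => ?_⟩
  obtain ⟨t₀, ht₀⟩ := eventually_atTop.1 (hg.eventually_lt_const (by positivity : 0 < k * (ε / 2)))
  have ha : a ≤ max a t₀ := le_max_left a t₀
  refine eventually_lt_of_hasDerivAt_le_mul_sub hk (half_lt_self hε)
    (hf.mono (Ici_subset_Ici.2 ha)) (fun x hx => hderiv x (ha.trans_lt hx)) fun x hx => ?_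
  rw [mul_sub]
  linarith [hle x (ha.trans_lt hx), ht₀ x ((le_max_right a t₀).trans hx.le)]

theorem mul_le_mul_rpow_of_mul_rpow_one_sub_le {x a b q : ℝ} (hx : 0 ≤ x)
    (h : a * x ^ (1 - q) ≤ b) : a * x ≤ b * x ^ q :=
  calc a * x = a * x ^ (1 - q) * x ^ q := by
        rw [mul_assoc, ← rpow_add' hx (by norm_num), sub_add_cancel, rpow_one]
    _ ≤ b * x ^ q := mul_le_mul_of_nonneg_right h (rpow_nonneg hx q)

noncomputable def siPotential (β μ p q : ℝ) (S I : ℝ → ℝ) (t : ℝ) : ℝ :=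
  (1 - q) * β * I t ^ p - μ * p * S t ^ (1 - q)

theorem hasDerivAt_siPotential {β μ p q t : ℝ} {S I : ℝ → ℝ} (hSt : 0 < S t) (hIt : 0 < I t)
    (hS : HasDerivAt S (-(β * S t ^ q * I t ^ p)) t)
    (hI : HasDerivAt I (β * S t ^ q * I t ^ p - μ * I t) t) :
    HasDerivAt (siPotential β μ p q S I)
      ((1 - q) * β ^ 2 * p * S t ^ q * I t ^ p * I t ^ (p - 1)) t := by
  have hIp := hI.rpow_const (p := p) (Or.inl hIt.ne')
  have hSq := hS.rpow_const (p := 1 - q) (Or.inl hSt.ne')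
  refine ((hIp.const_mul ((1 - q) * β)).sub (hSq.const_mul (μ * p))).congr_deriv ?_
  have hI1 : I t ^ (p - 1) * I t = I t ^ p := by rw [← rpow_add_one hIt.ne', sub_add_cancel]
  have hS1 : S t ^ q * S t ^ (1 - q - 1) = 1 := by rw [← rpow_add hSt]; norm_num
  linear_combination μ * p * (1 - q) * β * I t ^ p * hS1 - (1 - q) * β * μ * p * hI1

theorem siPotential_nonneg {β μ p q : ℝ} {S I : ℝ → ℝ} (hβ : 0 ≤ β) (hp : 0 ≤ p) (hq1 : q < 1)
    (hScont : ContinuousOn S (Ici 0)) (hIcont : ContinuousOn I (Ici 0))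
    (hSnonneg : ∀ t : ℝ, 0 ≤ t → 0 ≤ S t) (hIpos : ∀ t : ℝ, 0 ≤ t → 0 < I t)
    (hSode : ∀ t : ℝ, 0 < t → HasDerivAt S (-(β * S t ^ q * I t ^ p)) t)
    (hIode : ∀ t : ℝ, 0 < t → HasDerivAt I (β * S t ^ q * I t ^ p - μ * I t) t)
    (h0 : 0 ≤ siPotential β μ p q S I 0) (t : ℝ) (ht : 0 ≤ t) :
    0 ≤ siPotential β μ p q S I t := by
  have h1q : 0 < 1 - q := sub_pos.2 hq1
  have hIt := hIpos t ht
  rcases (hSnonneg t ht).eq_or_lt with hSt | hSt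
  · rw [siPotential, ← hSt, zero_rpow h1q.ne', mul_zero, sub_zero]
    positivity
  rcases ht.eq_or_lt with rfl | ht
  · exact h0
  have hSanti : AntitoneOn S (Ici 0) := by
    refine antitoneOn_Ici_of_hasDerivAt_nonpos hScont hSode fun x hx => neg_nonpos.2 ?_
    have := hSnonneg x hx.le
    have := hIpos x hx.le
    positivity
  have hcont : ContinuousOn (siPotential β μ p q S I) (Icc 0 t) :=
    (continuousOn_const.mul ((hIcont.mono Icc_subset_Ici_self).rpow_const
      fun x _ => Or.inr hp)).sub (continuousOn_const.mul
      ((hScont.mono Icc_subset_Ici_self).rpow_const fun x _ => Or.inr h1q.le))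
  have hmono : MonotoneOn (siPotential β μ p q S I) (Icc 0 t) := by
    refine monotoneOn_of_hasDerivWithinAt_nonneg (convex_Icc 0 t) hcont
      (f' := fun x => (1 - q) * β ^ 2 * p * S x ^ q * I x ^ p * I x ^ (p - 1))
      (fun x hx => ?_) fun x hx => ?_ <;> rw [interior_Icc] at hx
    · have hSx : 0 < S x := hSt.trans_le (hSanti hx.1.le ht.le hx.2.le)
      exact (hasDerivAt_siPotential hSx (hIpos x hx.1.le) (hSode x hx.1)
        (hIode x hx.1)).hasDerivWithinAt
    · have := hSnonneg x hx.1.le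
      have := hIpos x hx.1.le
      positivity
  exact h0.trans (hmono (left_mem_Icc.2 ht.le) (right_mem_Icc.2 ht.le) ht.le)

theorem si_infected_le {β μ p q : ℝ} {S I : ℝ → ℝ} (hμ : 0 ≤ μ)
    (hScont : ContinuousOn S (Ici 0)) (hIcont : ContinuousOn I (Ici 0))
    (hSnonneg : ∀ t : ℝ, 0 ≤ t → 0 ≤ S t) (hIpos : ∀ t : ℝ, 0 ≤ t → 0 < I t)
    (hSode : ∀ t : ℝ, 0 < t → HasDerivAt S (-(β * S t ^ q * I t ^ p)) t)
    (hIode : ∀ t : ℝ, 0 < t → HasDerivAt I (β * S t ^ q * I t ^ p - μ * I t) t)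
    (t : ℝ) (ht : 0 ≤ t) : I t ≤ S 0 + I 0 := by
  have hanti : AntitoneOn (fun t => S t + I t) (Ici 0) :=
    antitoneOn_Ici_of_hasDerivAt_nonpos (hScont.add hIcont)
      (fun x hx => (hSode x hx).add (hIode x hx)) fun x hx => by
        nlinarith [mul_nonneg hμ (hIpos x hx.le).le]
  linarith [hanti self_mem_Ici ht ht, hSnonneg t ht]

theorem stmt5_general (β μ p q S₀ I₀ : ℝ) (S I : ℝ → ℝ)
    (hβ : 0 < β) (hμ : 0 < μ) (hp : 0 < p) (hq0 : 0 < q) (hq1 : q < 1)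
    (hS0 : S 0 = S₀) (hI0 : I 0 = I₀)
    (hScont : ContinuousOn S (Set.Ici 0)) (hIcont : ContinuousOn I (Set.Ici 0))
    (hSnonneg : ∀ t : ℝ, 0 ≤ t → 0 ≤ S t) (hIpos : ∀ t : ℝ, 0 ≤ t → 0 < I t)
    (hSode : ∀ t : ℝ, 0 < t → HasDerivAt S (-(β * S t ^ q * I t ^ p)) t)
    (hIode : ∀ t : ℝ, 0 < t → HasDerivAt I (β * S t ^ q * I t ^ p - μ * I t) t)
    (heq : μ * p * S₀ ^ (1 - q) = (1 - q) * β * I₀ ^ p) :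
    Tendsto S atTop (𝓝 0) ∧ Tendsto I atTop (𝓝 0) := by
  have h1q : 0 < 1 - q := sub_pos.2 hq1
  have hΦ := siPotential_nonneg hβ.le hp.le hq1 hScont hIcont hSnonneg hIpos hSode hIode
    (by rw [siPotential, hS0, hI0, heq, sub_self])
  have hS : Tendsto S atTop (𝓝 0) := by
    refine tendsto_zero_of_hasDerivAt_le_sub_mul (g := fun _ => 0) (k := μ * p / (1 - q))
      (by positivity) hScont hSode (fun x hx => ?_) tendsto_const_nhds
      ((eventually_ge_atTop 0).mono hSnonneg)
    have := mul_le_mul_rpow_of_mul_rpow_one_sub_le (hSnonneg x hx.le)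
      (sub_nonneg.1 (hΦ x hx.le))
    rw [zero_sub, neg_le_neg_iff, div_mul_eq_mul_div, div_le_iff₀ h1q]
    linarith
  have hincidence : Tendsto (fun t => β * S t ^ q * I t ^ p) atTop (𝓝 0) := by
    refine squeeze_zero' ((eventually_ge_atTop 0).mono fun t ht => ?_)
      ((eventually_ge_atTop 0).mono fun t ht => ?_)
      (by simpa using ((hS.rpow_const_nhds_zero hq0).const_mul β).mul_const ((S₀ + I₀) ^ p))
    · have := hSnonneg t ht
      have := hIpos t ht
      positivity
    · have := hSnonneg t ht
      gcongr
      · exact (hIpos t ht).le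
      · simpa only [hS0, hI0] using
          si_infected_le hμ.le hScont hIcont hSnonneg hIpos hSode hIode t ht
  exact ⟨hS, tendsto_zero_of_hasDerivAt_le_sub_mul hμ hIcont hIode (fun x _ => le_rfl)
    hincidence ((eventually_ge_atTop 0).mono fun t ht => (hIpos t ht).le)⟩

/-- Proposition 8.1(i) of the paper, equality case: for the SI ODE system
`S' = −β S^q I^p`, `I' = β S^q I^p − μ I` with `β, μ, p > 0`, `q ∈ (0,1)`,
`S(0) = S₀ > 0`, `I(0) = I₀ > 0`, if `μ·p·S₀^{1−q} = (1−q)·β·I₀^p`, then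
`S(t) → 0` and `I(t) → 0` as `t → ∞`. -/
theorem stmt5 (β μ p q S₀ I₀ : ℝ) (S I : ℝ → ℝ)
    (hβ : 0 < β) (hμ : 0 < μ) (hp : 0 < p) (hq0 : 0 < q) (hq1 : q < 1)
    (hS₀ : 0 < S₀) (hI₀ : 0 < I₀) (hS0 : S 0 = S₀) (hI0 : I 0 = I₀)
    (hScont : ContinuousOn S (Set.Ici 0)) (hIcont : ContinuousOn I (Set.Ici 0))
    (hSnonneg : ∀ t : ℝ, 0 ≤ t → 0 ≤ S t) (hIpos : ∀ t : ℝ, 0 ≤ t → 0 < I t)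
    (hSode : ∀ t : ℝ, 0 < t → HasDerivAt S (-(β * S t ^ q * I t ^ p)) t)
    (hIode : ∀ t : ℝ, 0 < t → HasDerivAt I (β * S t ^ q * I t ^ p - μ * I t) t)
    (heq : μ * p * S₀ ^ (1 - q) = (1 - q) * β * I₀ ^ p) :
    Tendsto S atTop (𝓝 0) ∧ Tendsto I atTop (𝓝 0) :=
  stmt5_general β μ p q S₀ I₀ S I hβ hμ hp hq0 hq1 hS0 hI0 hScont hIcont hSnonneg hIpos hSode hIode
    heq
end

section
/- Suppose 0 < p < 1 and q > 0. Then S(t) → 0 and I(t) → 0 as t → ∞. -/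
/-!
Along any solution the total population `S + I` decreases at rate `μ I`, and `S` decreases too;
both are nonnegative, so both converge, and hence so does `I`. A positive limit of `I` would make
`S + I` decrease at a uniform positive rate, so `I → 0`. If `S` tended to `A > 0`, then eventually
`I' ≥ β (A / 2) ^ q I ^ p - μ I`, which is nonnegative once `I` is small, because `I ^ p`
dominates `I` near `0` when `p < 1`: so `I` would eventually be nondecreasing, positive and tending
to `0`, which is absurd.
-/

open Filter Topology Set

section Asymptotics

variable {f f' : ℝ → ℝ}

theorem exists_antitoneOn_Ici_of_eventually_hasDerivAt_nonpos
    (h : ∀ᶠ t in atTop, HasDerivAt f (f' t) t ∧ f' t ≤ 0) :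
    ∃ a, AntitoneOn f (Ici a) := by
  obtain ⟨a, ha⟩ := eventually_atTop.1 h
  refine ⟨a, antitoneOn_of_hasDerivWithinAt_nonpos (f' := f') (convex_Ici a)
    (fun t ht => (ha t ht).1.continuousAt.continuousWithinAt) (fun t ht => ?_) fun t ht => ?_⟩
  · rw [interior_Ici] at ht ⊢
    exact (ha t (le_of_lt ht)).1.hasDerivWithinAt
  · rw [interior_Ici] at ht
    exact (ha t (le_of_lt ht)).2

theorem exists_monotoneOn_Ici_of_eventually_hasDerivAt_nonneg
    (h : ∀ᶠ t in atTop, HasDerivAt f (f' t) t ∧ 0 ≤ f' t) :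
    ∃ a, MonotoneOn f (Ici a) := by
  obtain ⟨a, ha⟩ := eventually_atTop.1 h
  refine ⟨a, monotoneOn_of_hasDerivWithinAt_nonneg (f' := f') (convex_Ici a)
    (fun t ht => (ha t ht).1.continuousAt.continuousWithinAt) (fun t ht => ?_) fun t ht => ?_⟩
  · rw [interior_Ici] at ht ⊢
    exact (ha t (le_of_lt ht)).1.hasDerivWithinAt
  · rw [interior_Ici] at ht
    exact (ha t (le_of_lt ht)).2

theorem exists_tendsto_of_eventually_hasDerivAt_nonpos {b : ℝ}
    (hderiv : ∀ᶠ t in atTop, HasDerivAt f (f' t) t ∧ f' t ≤ 0)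
    (hbdd : ∀ᶠ t in atTop, b ≤ f t) :
    ∃ L, Tendsto f atTop (𝓝 L) := by
  obtain ⟨a, hanti⟩ := exists_antitoneOn_Ici_of_eventually_hasDerivAt_nonpos hderiv
  obtain ⟨a', hb⟩ := eventually_atTop.1 hbdd
  set c := max a a'
  have hanti' : Antitone fun t => f (max t c) := fun s t hst =>
    hanti (le_trans (le_max_left a a') (le_max_right s c))
      (le_trans (le_max_left a a') (le_max_right t c)) (max_le_max_right c hst)
  have hbdd' : BddBelow (range fun t => f (max t c)) :=
    ⟨b, by rintro _ ⟨t, rfl⟩; exact hb _ (le_trans (le_max_right a a') (le_max_right t c))⟩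
  refine ⟨_, (tendsto_atTop_ciInf hanti' hbdd').congr' ?_⟩
  filter_upwards [eventually_ge_atTop c] with t ht
  rw [max_eq_left ht]

theorem tendsto_atBot_of_eventually_hasDerivAt_le {k : ℝ} (hk : k < 0)
    (h : ∀ᶠ t in atTop, HasDerivAt f (f' t) t ∧ f' t ≤ k) : Tendsto f atTop atBot := by
  have hshift : ∀ᶠ t in atTop,
      HasDerivAt (fun s => f s - k * s) (f' t - k) t ∧ f' t - k ≤ 0 := by
    filter_upwards [h] with t ht
    exact ⟨ht.1.sub (by simpa using (hasDerivAt_id t).const_mul k), by linarith [ht.2]⟩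
  obtain ⟨a, hanti⟩ := exists_antitoneOn_Ici_of_eventually_hasDerivAt_nonpos hshift
  have hlin : Tendsto (fun t => f a - k * a + k * t) atTop atBot :=
    tendsto_atBot_add_const_left _ _ (tendsto_id.const_mul_atTop_of_neg hk)
  refine tendsto_atBot_mono' _ ?_ hlin
  filter_upwards [eventually_ge_atTop a] with t ht
  linarith [hanti self_mem_Ici ht ht]

theorem eventually_le_of_tendsto_of_eventually_hasDerivAt_nonneg {L : ℝ}
    (hderiv : ∀ᶠ t in atTop, HasDerivAt f (f' t) t ∧ 0 ≤ f' t)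
    (hf : Tendsto f atTop (𝓝 L)) :
    ∀ᶠ t in atTop, f t ≤ L := by
  obtain ⟨a, hmono⟩ := exists_monotoneOn_Ici_of_eventually_hasDerivAt_nonneg hderiv
  filter_upwards [eventually_ge_atTop a] with t ht
  refine ge_of_tendsto hf ?_
  filter_upwards [eventually_ge_atTop t] with s hs
  exact hmono ht (le_trans ht hs) hs

end Asymptotics

theorem eventually_mul_le_mul_rpow_nhdsGT_zero {p D : ℝ} (hp : p < 1) (hD : 0 < D) (c : ℝ) :
    ∀ᶠ x in 𝓝[>] 0, c * x ≤ D * x ^ p := by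
  have hsmall : Tendsto (fun x : ℝ => c * x ^ (1 - p)) (𝓝 0) (𝓝 0) := by
    simpa [Real.zero_rpow (sub_ne_zero.2 hp.ne')] using
      ((Real.continuousAt_rpow_const 0 (1 - p) (Or.inr (sub_nonneg.2 hp.le))).tendsto.const_mul c)
  filter_upwards [self_mem_nhdsWithin, nhdsWithin_le_nhds (hsmall.eventually (gt_mem_nhds hD))]
    with x (hx : 0 < x) hlt
  calc c * x = c * x ^ (1 - p) * x ^ p := by
        rw [mul_assoc, ← Real.rpow_add hx, sub_add_cancel, Real.rpow_one]
    _ ≤ D * x ^ p := by gcongr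

structure IsSISolution (β μ p q : ℝ) (S I : ℝ → ℝ) : Prop where
  nonneg_S : ∀ t, 0 < t → 0 ≤ S t
  pos_I : ∀ t, 0 < t → 0 < I t
  hasDerivAt_S : ∀ t, 0 < t → HasDerivAt S (-(β * S t ^ q * I t ^ p)) t
  hasDerivAt_I : ∀ t, 0 < t → HasDerivAt I (β * S t ^ q * I t ^ p - μ * I t) t

namespace IsSISolution

variable {β μ p q : ℝ} {S I : ℝ → ℝ}

theorem hasDerivAt_add (h : IsSISolution β μ p q S I) {t : ℝ} (ht : 0 < t) :
    HasDerivAt (S + I) (-(μ * I t)) t := by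
  rw [show -(μ * I t) = -(β * S t ^ q * I t ^ p) + (β * S t ^ q * I t ^ p - μ * I t) by ring]
  exact (h.hasDerivAt_S t ht).add (h.hasDerivAt_I t ht)

theorem exists_tendsto_S (h : IsSISolution β μ p q S I) (hβ : 0 ≤ β) :
    ∃ A, Tendsto S atTop (𝓝 A) := by
  refine exists_tendsto_of_eventually_hasDerivAt_nonpos
    (f' := fun t => -(β * S t ^ q * I t ^ p)) (b := 0) ?_ ?_
  · filter_upwards [eventually_gt_atTop 0] with t ht
    refine ⟨h.hasDerivAt_S t ht, neg_nonpos.2 ?_⟩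
    have := h.nonneg_S t ht
    have := (h.pos_I t ht).le
    positivity
  · filter_upwards [eventually_gt_atTop 0] with t ht using h.nonneg_S t ht

theorem exists_tendsto_I (h : IsSISolution β μ p q S I) (hβ : 0 ≤ β) (hμ : 0 ≤ μ) :
    ∃ B, Tendsto I atTop (𝓝 B) := by
  obtain ⟨A, hA⟩ := h.exists_tendsto_S hβ
  obtain ⟨L, hL⟩ : ∃ L, Tendsto (S + I) atTop (𝓝 L) := by
    refine exists_tendsto_of_eventually_hasDerivAt_nonpos
      (f' := fun t => -(μ * I t)) (b := 0) ?_ ?_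
    · filter_upwards [eventually_gt_atTop 0] with t ht
      exact ⟨h.hasDerivAt_add ht, neg_nonpos.2 (mul_nonneg hμ (h.pos_I t ht).le)⟩
    · filter_upwards [eventually_gt_atTop 0] with t ht
      exact add_nonneg (h.nonneg_S t ht) (h.pos_I t ht).le
  exact ⟨L - A, by simpa using hL.sub hA⟩

theorem tendsto_I_zero (h : IsSISolution β μ p q S I) (hβ : 0 ≤ β) (hμ : 0 < μ) :
    Tendsto I atTop (𝓝 0) := by
  obtain ⟨B, hB⟩ := h.exists_tendsto_I hβ hμ.le
  have hB0 : 0 ≤ B := ge_of_tendsto hB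
    (by filter_upwards [eventually_gt_atTop 0] with t ht using (h.pos_I t ht).le)
  obtain rfl | hBpos := hB0.eq_or_lt
  · exact hB
  have hdecay : Tendsto (S + I) atTop atBot := by
    refine tendsto_atBot_of_eventually_hasDerivAt_le (f' := fun t => -(μ * I t))
      (k := -(μ * (B / 2))) (by nlinarith) ?_
    filter_upwards [eventually_gt_atTop 0, hB.eventually (lt_mem_nhds (half_lt_self hBpos))]
      with t ht hIt
    exact ⟨h.hasDerivAt_add ht, by nlinarith⟩
  obtain ⟨t, hneg, ht⟩ :=
    ((hdecay.eventually (eventually_lt_atBot 0)).and (eventually_gt_atTop 0)).exists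
  exact absurd hneg (not_lt.2 (add_nonneg (h.nonneg_S t ht) (h.pos_I t ht).le))

theorem tendsto_S_zero (h : IsSISolution β μ p q S I) (hβ : 0 < β) (hμ : 0 < μ) (hp : p < 1)
    (hq : 0 ≤ q) : Tendsto S atTop (𝓝 0) := by
  obtain ⟨A, hA⟩ := h.exists_tendsto_S hβ.le
  have hA0 : 0 ≤ A := ge_of_tendsto hA
    (by filter_upwards [eventually_gt_atTop 0] with t ht using h.nonneg_S t ht)
  obtain rfl | hApos := hA0.eq_or_lt
  · exact hA
  have hD : 0 < β * (A / 2) ^ q := by positivity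
  have hI : Tendsto I atTop (𝓝[>] 0) :=
    tendsto_nhdsWithin_iff.2 ⟨h.tendsto_I_zero hβ.le hμ,
      by filter_upwards [eventually_gt_atTop 0] with t ht using h.pos_I t ht⟩
  have hgrow : ∀ᶠ t in atTop, HasDerivAt I (β * S t ^ q * I t ^ p - μ * I t) t ∧
      0 ≤ β * S t ^ q * I t ^ p - μ * I t := by
    filter_upwards [eventually_gt_atTop 0, hA.eventually (lt_mem_nhds (half_lt_self hApos)),
      hI.eventually (eventually_mul_le_mul_rpow_nhdsGT_zero hp hD μ)] with t ht hSt hIt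
    have := h.pos_I t ht
    refine ⟨h.hasDerivAt_I t ht, sub_nonneg.2 (hIt.trans ?_)⟩
    gcongr
  obtain ⟨t, hle, ht⟩ :=
    ((eventually_le_of_tendsto_of_eventually_hasDerivAt_nonneg hgrow
      (h.tendsto_I_zero hβ.le hμ)).and (eventually_gt_atTop 0)).exists
  exact absurd hle (not_le.2 (h.pos_I t ht))

end IsSISolution

theorem stmt9_general (β μ p q : ℝ) (S I : ℝ → ℝ)
    (hβ : 0 < β) (hμ : 0 < μ) (hp1 : p < 1) (hq : 0 < q)
    (hSnonneg : ∀ t : ℝ, 0 ≤ t → 0 ≤ S t) (hIpos : ∀ t : ℝ, 0 ≤ t → 0 < I t)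
    (hSode : ∀ t : ℝ, 0 < t → HasDerivAt S (-(β * S t ^ q * I t ^ p)) t)
    (hIode : ∀ t : ℝ, 0 < t → HasDerivAt I (β * S t ^ q * I t ^ p - μ * I t) t) :
    Tendsto S atTop (𝓝 0) ∧ Tendsto I atTop (𝓝 0) := by
  have h : IsSISolution β μ p q S I :=
    ⟨fun t ht => hSnonneg t ht.le, fun t ht => hIpos t ht.le, hSode, hIode⟩
  exact ⟨h.tendsto_S_zero hβ hμ hp1 hq.le, h.tendsto_I_zero hβ.le hμ⟩

/-- Claim (1) of Section 8.1 of the paper: for the SI ODE system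
`S' = −β S^q I^p`, `I' = β S^q I^p − μ I` with `β, μ, q > 0` and `0 < p < 1`,
`S(0) = S₀ > 0`, `I(0) = I₀ > 0`, both `S(t) → 0` and `I(t) → 0` as `t → ∞`. -/
theorem stmt9 (β μ p q S₀ I₀ : ℝ) (S I : ℝ → ℝ)
    (hβ : 0 < β) (hμ : 0 < μ) (hp0 : 0 < p) (hp1 : p < 1) (hq : 0 < q)
    (hS₀ : 0 < S₀) (hI₀ : 0 < I₀) (hS0 : S 0 = S₀) (hI0 : I 0 = I₀)
    (hScont : ContinuousOn S (Set.Ici 0)) (hIcont : ContinuousOn I (Set.Ici 0))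
    (hSnonneg : ∀ t : ℝ, 0 ≤ t → 0 ≤ S t) (hIpos : ∀ t : ℝ, 0 ≤ t → 0 < I t)
    (hSode : ∀ t : ℝ, 0 < t → HasDerivAt S (-(β * S t ^ q * I t ^ p)) t)
    (hIode : ∀ t : ℝ, 0 < t → HasDerivAt I (β * S t ^ q * I t ^ p - μ * I t) t) :
    Tendsto S atTop (𝓝 0) ∧ Tendsto I atTop (𝓝 0) :=
  stmt9_general β μ p q S I hβ hμ hp1 hq hSnonneg hIpos hSode hIode
end

section
/- Suppose p ≥ 1 and q ≥ 1. Then there exists a constant S* > 0 such that S(t) → S* and I(t) → 0 as t → ∞. -/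
open Filter Topology

lemma tendsto_of_antitoneOn_Ici (f : ℝ → ℝ) (hf : AntitoneOn f (Set.Ici (0:ℝ)))
    (m : ℝ) (hm : ∀ t, 0 ≤ t → m ≤ f t) :
    ∃ l, m ≤ l ∧ Tendsto f atTop (𝓝 l) := by
  set g : ℝ → ℝ := fun t => f (max t 0) with hg_def
  have hg : Antitone g := fun a b hab =>
    hf (le_max_right a 0) (le_max_right b 0) (max_le_max hab le_rfl)
  have hbdd : BddBelow (Set.range g) := by
    refine ⟨m, ?_⟩
    rintro x ⟨t, rfl⟩
    exact hm _ (le_max_right t 0)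
  have htend := tendsto_atTop_ciInf hg hbdd
  refine ⟨⨅ i, g i, ?_, ?_⟩
  · exact le_ciInf fun t => hm _ (le_max_right t 0)
  · refine htend.congr' ?_
    filter_upwards [eventually_ge_atTop (0:ℝ)] with t ht
    simp [hg_def, max_eq_left ht]

set_option maxHeartbeats 1000000 in
/-- Claim (2) of Section 8.1 of the paper: for the SI ODE system
`S' = −β S^q I^p`, `I' = β S^q I^p − μ I` with `β, μ > 0` and `p, q ≥ 1`,
`S(0) = S₀ > 0`, `I(0) = I₀ > 0`, there is a constant `S* > 0` such that
`S(t) → S*` and `I(t) → 0` as `t → ∞`. -/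
theorem stmt10 (β μ p q S₀ I₀ : ℝ) (S I : ℝ → ℝ)
    (hβ : 0 < β) (hμ : 0 < μ) (hp : 1 ≤ p) (hq : 1 ≤ q)
    (hS₀ : 0 < S₀) (hI₀ : 0 < I₀) (hS0 : S 0 = S₀) (hI0 : I 0 = I₀)
    (hScont : ContinuousOn S (Set.Ici 0)) (hIcont : ContinuousOn I (Set.Ici 0))
    (hSnonneg : ∀ t : ℝ, 0 ≤ t → 0 ≤ S t) (hIpos : ∀ t : ℝ, 0 ≤ t → 0 < I t)
    (hSode : ∀ t : ℝ, 0 < t → HasDerivAt S (-(β * S t ^ q * I t ^ p)) t)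
    (hIode : ∀ t : ℝ, 0 < t → HasDerivAt I (β * S t ^ q * I t ^ p - μ * I t) t) :
    ∃ Sstar : ℝ, 0 < Sstar ∧ Tendsto S atTop (𝓝 Sstar) ∧ Tendsto I atTop (𝓝 0) := by
  set C : ℝ := S₀ + I₀ with hC_def
  have hC : 0 < C := by positivity
  set N : ℝ → ℝ := fun t => S t + I t with hN_def
  have hN0 : N 0 = C := by simp [hN_def, hS0, hI0, hC_def]
  have hNode : ∀ t : ℝ, 0 < t → HasDerivAt N (-(μ * I t)) t := by
    intro t ht
    have h := (hSode t ht).add (hIode t ht)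
    exact h.congr_deriv (by ring)
  have hNcont : ContinuousOn N (Set.Ici 0) := hScont.add hIcont
  have hNanti : AntitoneOn N (Set.Ici 0) := by
    apply antitoneOn_of_deriv_nonpos (convex_Ici 0) hNcont
    · intro x hx
      rw [interior_Ici] at hx
      exact (hNode x hx).differentiableAt.differentiableWithinAt
    · intro x hx
      rw [interior_Ici] at hx
      rw [(hNode x hx).deriv]
      have hI := hIpos x hx.le
      nlinarith
  have hSanti : AntitoneOn S (Set.Ici 0) := by
    apply antitoneOn_of_deriv_nonpos (convex_Ici 0) hScont
    · intro x hx
      rw [interior_Ici] at hx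
      exact (hSode x hx).differentiableAt.differentiableWithinAt
    · intro x hx
      rw [interior_Ici] at hx
      rw [(hSode x hx).deriv]
      have hS := hSnonneg x hx.le
      have hI := (hIpos x hx.le).le
      have : 0 ≤ β * S x ^ q * I x ^ p := by positivity
      linarith
  have hSle : ∀ t, 0 ≤ t → S t ≤ S₀ := by
    intro t ht
    have := hSanti Set.self_mem_Ici ht ht
    rwa [hS0] at this
  have hNle : ∀ t, 0 ≤ t → N t ≤ C := by
    intro t ht
    have := hNanti Set.self_mem_Ici ht ht
    rwa [hN0] at this
  have hIle : ∀ t, 0 ≤ t → I t ≤ C := by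
    intro t ht
    have h1 := hNle t ht
    have h2 := hSnonneg t ht
    simp only [hN_def] at h1
    linarith
  have hNnonneg : ∀ t, 0 ≤ t → 0 ≤ N t := by
    intro t ht
    have := hSnonneg t ht
    have := (hIpos t ht).le
    simp only [hN_def]
    linarith
  set k : ℝ := β * S₀ ^ (q - 1) * C ^ (p - 1) / μ with hk_def
  have hk : 0 < k := by
    have h1 : (0:ℝ) < S₀ ^ (q - 1) := Real.rpow_pos_of_pos hS₀ _
    have h2 : (0:ℝ) < C ^ (p - 1) := Real.rpow_pos_of_pos hC _
    positivity
  have hkμ : k * μ = β * S₀ ^ (q - 1) * C ^ (p - 1) := by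
    rw [hk_def, div_mul_cancel₀ _ hμ.ne']
  set δ : ℝ := S₀ * Real.exp (-(k * C)) with hδ_def
  have hδ : 0 < δ := by positivity
  have hδle : δ ≤ S₀ := by
    have h1 : Real.exp (-(k * C)) ≤ 1 := by
      rw [Real.exp_le_one_iff]
      nlinarith
    nlinarith
  -- the key positivity estimate
  have key : ∀ t, 0 ≤ t → δ / 2 < S t := by
    by_contra hcon
    push_neg at hcon
    obtain ⟨t₀, ht₀, hSt₀⟩ := hcon
    set B : Set ℝ := Set.Ici 0 ∩ S ⁻¹' Set.Iic (δ / 2) with hB_def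
    have hBclosed : IsClosed B :=
      hScont.preimage_isClosed_of_isClosed isClosed_Ici isClosed_Iic
    have hBne : B.Nonempty := ⟨t₀, ht₀, hSt₀⟩
    have hBbdd : BddBelow B := ⟨0, fun x hx => hx.1⟩
    set t₁ : ℝ := sInf B with ht₁_def
    have ht₁B : t₁ ∈ B := hBclosed.csInf_mem hBne hBbdd
    have ht₁0 : 0 ≤ t₁ := ht₁B.1
    have hSt₁ : S t₁ ≤ δ / 2 := ht₁B.2
    have ht₁pos : 0 < t₁ := by
      rcases ht₁0.lt_or_eq with h | h
      · exact h
      · exfalso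
        rw [← h, hS0] at hSt₁
        linarith
    have hlt : ∀ s, 0 ≤ s → s < t₁ → δ / 2 < S s := by
      intro s hs hst
      by_contra hcc
      push_neg at hcc
      exact absurd (csInf_le hBbdd ⟨hs, hcc⟩) (not_le.2 hst)
    have hposIcc : ∀ s ∈ Set.Icc (0:ℝ) t₁, δ / 2 ≤ S s := by
      intro s hs
      rcases hs.2.lt_or_eq with h | h
      · exact (hlt s hs.1 h).le
      · rw [h]
        have hcw : Tendsto S (𝓝[Set.Ico 0 t₁] t₁) (𝓝 (S t₁)) :=
          (hScont t₁ (Set.mem_Ici.2 ht₁0)).mono (fun x hx => hx.1)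
        haveI : (𝓝[Set.Ico 0 t₁] t₁).NeBot := right_nhdsWithin_Ico_neBot ht₁pos
        refine ge_of_tendsto hcw ?_
        filter_upwards [self_mem_nhdsWithin] with x hx
        exact (hlt x hx.1 hx.2).le
    set L : ℝ → ℝ := fun t => Real.log (S t) - k * N t with hL_def
    have hSpos : ∀ s ∈ Set.Icc (0:ℝ) t₁, 0 < S s := fun s hs =>
      lt_of_lt_of_le (by linarith) (hposIcc s hs)
    have hLD : ∀ x ∈ Set.Ioo (0:ℝ) t₁,
        HasDerivAt L (-(β * S x ^ q * I x ^ p) / S x -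
          k * (-(β * S x ^ q * I x ^ p) + (β * S x ^ q * I x ^ p - μ * I x))) x := by
      intro x hx
      have hSx : 0 < S x := hSpos x (Set.Ioo_subset_Icc_self hx)
      exact ((hSode x hx.1).log hSx.ne').sub
        (((hSode x hx.1).add (hIode x hx.1)).const_mul k)
    have hLmono : MonotoneOn L (Set.Icc 0 t₁) := by
      apply monotoneOn_of_deriv_nonneg (convex_Icc 0 t₁)
      · apply ContinuousOn.sub
        · exact ContinuousOn.log (hScont.mono (Set.Icc_subset_Ici_self))
            (fun x hx => (hSpos x hx).ne')
        · exact continuousOn_const.mul (hNcont.mono Set.Icc_subset_Ici_self)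
      · intro x hx
        rw [interior_Icc] at hx
        exact (hLD x hx).differentiableAt.differentiableWithinAt
      · intro x hx
        rw [interior_Icc] at hx
        rw [(hLD x hx).deriv]
        have hSx : 0 < S x := hSpos x (Set.Ioo_subset_Icc_self hx)
        have hIx : 0 < I x := hIpos x hx.1.le
        have hSq : S x ^ (q - 1) * S x = S x ^ q := by
          calc S x ^ (q - 1) * S x = S x ^ (q - 1) * S x ^ (1:ℝ) := by rw [Real.rpow_one]
            _ = S x ^ (q - 1 + 1) := (Real.rpow_add hSx _ _).symm
            _ = S x ^ q := by ring_nf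
        have hIp : I x ^ (p - 1) * I x = I x ^ p := by
          calc I x ^ (p - 1) * I x = I x ^ (p - 1) * I x ^ (1:ℝ) := by rw [Real.rpow_one]
            _ = I x ^ (p - 1 + 1) := (Real.rpow_add hIx _ _).symm
            _ = I x ^ p := by ring_nf
        have h1 : S x ^ (q - 1) ≤ S₀ ^ (q - 1) :=
          Real.rpow_le_rpow (hSnonneg x hx.1.le) (hSle x hx.1.le) (by linarith)
        have h2 : I x ^ (p - 1) ≤ C ^ (p - 1) :=
          Real.rpow_le_rpow hIx.le (hIle x hx.1.le) (by linarith)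
        have h1' : (0:ℝ) ≤ S x ^ (q - 1) := Real.rpow_nonneg (hSnonneg x hx.1.le) _
        have h2' : (0:ℝ) ≤ I x ^ (p - 1) := Real.rpow_nonneg hIx.le _
        have hkey : β * (S x ^ (q - 1) * I x ^ (p - 1)) * I x ≤ k * μ * I x := by
          rw [hkμ]
          have hAB : S x ^ (q - 1) * I x ^ (p - 1) ≤ S₀ ^ (q - 1) * C ^ (p - 1) :=
            mul_le_mul h1 h2 h2' (Real.rpow_nonneg hS₀.le _)
          calc β * (S x ^ (q - 1) * I x ^ (p - 1)) * I x
              ≤ β * (S₀ ^ (q - 1) * C ^ (p - 1)) * I x :=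
                mul_le_mul_of_nonneg_right (mul_le_mul_of_nonneg_left hAB hβ.le) hIx.le
            _ = β * S₀ ^ (q - 1) * C ^ (p - 1) * I x := by ring
        have hdiv : -(β * S x ^ q * I x ^ p) / S x =
            -(β * (S x ^ (q - 1) * I x ^ (p - 1)) * I x) := by
          rw [← hSq, ← hIp]
          field_simp
        rw [hdiv]
        nlinarith
    have hL01 : L 0 ≤ L t₁ :=
      hLmono ⟨le_rfl, ht₁0⟩ ⟨ht₁0, le_rfl⟩ ht₁0
    have hN1 : 0 ≤ N t₁ := hNnonneg t₁ ht₁0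
    have hlog : Real.log δ ≤ Real.log (S t₁) := by
      have hL0 : L 0 = Real.log S₀ - k * C := by
        simp only [hL_def, hS0, hN0]
      have hlogδ : Real.log δ = Real.log S₀ + (-(k * C)) := by
        rw [hδ_def, Real.log_mul hS₀.ne' (Real.exp_ne_zero _), Real.log_exp]
      rw [hlogδ]
      simp only [hL_def] at hL01
      rw [hS0, hN0] at hL01
      nlinarith [mul_nonneg hk.le hN1]
    have hSt₁pos : 0 < S t₁ := hSpos t₁ ⟨ht₁0, le_rfl⟩
    have : δ ≤ S t₁ := by
      calc δ = Real.exp (Real.log δ) := (Real.exp_log hδ).symm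
        _ ≤ Real.exp (Real.log (S t₁)) := Real.exp_le_exp.2 hlog
        _ = S t₁ := Real.exp_log hSt₁pos
    linarith
  -- limits
  obtain ⟨Sstar, hSstar_ge, hStend⟩ :=
    tendsto_of_antitoneOn_Ici S hSanti (δ / 2) (fun t ht => (key t ht).le)
  obtain ⟨Linf, hLinf_ge, hNtend⟩ :=
    tendsto_of_antitoneOn_Ici N hNanti 0 hNnonneg
  have hSstar_pos : 0 < Sstar := lt_of_lt_of_le (by linarith) hSstar_ge
  have hItend : Tendsto I atTop (𝓝 (Linf - Sstar)) := by
    have h := hNtend.sub hStend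
    refine h.congr (fun t => ?_)
    simp [hN_def]
  set c : ℝ := Linf - Sstar with hc_def
  have hc0 : 0 ≤ c := by
    refine ge_of_tendsto hItend ?_
    filter_upwards [eventually_ge_atTop (0:ℝ)] with t ht
    exact (hIpos t ht).le
  rcases hc0.eq_or_lt with h | h
  · exact ⟨Sstar, hSstar_pos, hStend, h ▸ hItend⟩
  · exfalso
    obtain ⟨T₀, hT₀⟩ : ∃ T, ∀ t ≥ T, c / 2 ≤ I t :=
      eventually_atTop.mp (hItend.eventually (eventually_ge_nhds (by linarith)))
    set T : ℝ := max T₀ 0 with hT_def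
    have hTnn : (0:ℝ) ≤ T := le_max_right _ _
    have hT' : ∀ t, T ≤ t → c / 2 ≤ I t := fun t ht =>
      hT₀ t (le_trans (le_max_left _ _) ht)
    set M : ℝ → ℝ := fun t => N t + μ * (c / 2) * t with hM_def
    have hMD : ∀ x ∈ Set.Ioi T, HasDerivAt M (-(μ * I x) + μ * (c / 2)) x := by
      intro x hx
      have hx0 : 0 < x := lt_of_le_of_lt hTnn hx
      have hlin : HasDerivAt (fun t : ℝ => μ * (c / 2) * t) (μ * (c / 2)) x := by
        simpa using (hasDerivAt_id x).const_mul (μ * (c / 2))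
      exact (hNode x hx0).add hlin
    have hManti : AntitoneOn M (Set.Ici T) := by
      apply antitoneOn_of_deriv_nonpos (convex_Ici T)
      · exact (hNcont.mono (Set.Ici_subset_Ici.2 hTnn)).add
          (continuousOn_const.mul continuousOn_id)
      · intro x hx
        rw [interior_Ici] at hx
        exact (hMD x hx).differentiableAt.differentiableWithinAt
      · intro x hx
        rw [interior_Ici] at hx
        rw [(hMD x hx).deriv]
        have := hT' x (le_of_lt hx)
        nlinarith
    set t₂ : ℝ := T + (N T + 1) / (μ * (c / 2)) with ht₂_def
    have hμc : 0 < μ * (c / 2) := by positivity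
    have hNT : 0 ≤ N T := hNnonneg T hTnn
    have ht₂T : T ≤ t₂ := by
      have h0 : 0 ≤ (N T + 1) / (μ * (c / 2)) := by positivity
      rw [ht₂_def]
      linarith
    have hM2 : M t₂ ≤ M T := hManti Set.self_mem_Ici ht₂T ht₂T
    have hmul : μ * (c / 2) * (t₂ - T) = N T + 1 := by
      rw [ht₂_def]
      field_simp
      ring
    have hNt₂ : 0 ≤ N t₂ := hNnonneg t₂ (le_trans hTnn ht₂T)
    simp only [hM_def] at hM2
    have h2 : μ * (c / 2) * t₂ - μ * (c / 2) * T = N T + 1 := by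
      rw [← hmul]; ring
    clear_value t₂ M T c N
    linarith
end

section
/- Let p > 1, q > 0 and β, γ, N > 0 be real numbers, and set N* = q^q·(p−1)^{p−1}·N^{p+q−1}/(p+q−1)^{p+q−1}. Consider the set R = {S ∈ (0,N) : β·S^q·(N−S)^{p−1} = γ}. Then: if γ < β·N* the set R has exactly two elements; if γ = β·N* the set R has exactly one element (namely S = q·N/(p+q−1)); and if γ > β·N* the set R is empty. -/
open Set Real

/-- Steady-state classification in the case `p > 1` of Proposition 8.2 of the paper:
with `N* = q^q·(p−1)^{p−1}·N^{p+q−1}/(p+q−1)^{p+q−1}` and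
`R = {S ∈ (0,N) : β·S^q·(N−S)^{p−1} = γ}`, the set `R` has exactly two elements if
`γ < β·N*`, exactly the one element `q·N/(p+q−1)` if `γ = β·N*`, and is empty if
`γ > β·N*`. -/
theorem stmt12 (p q β γ N Nstar : ℝ) (hp : 1 < p) (hq : 0 < q)
    (hβ : 0 < β) (hγ : 0 < γ) (hN : 0 < N)
    (hNstar : Nstar =
      q ^ q * (p - 1) ^ (p - 1) * N ^ (p + q - 1) / (p + q - 1) ^ (p + q - 1))
    (R : Set ℝ)
    (hR : R = {S : ℝ | S ∈ Set.Ioo 0 N ∧ β * (S ^ q * (N - S) ^ (p - 1)) = γ}) :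
    (γ < β * Nstar → ∃ S₁ S₂ : ℝ, S₁ ≠ S₂ ∧ R = {S₁, S₂}) ∧
    (γ = β * Nstar → R = {q * N / (p + q - 1)}) ∧
    (β * Nstar < γ → R = ∅) := by
  set D := p + q - 1 with hDdef
  have hD : 0 < D := by simp only [hDdef]; linarith
  set S0 := q * N / D with hS0def
  have hS0pos : 0 < S0 := by positivity
  have hS0lt : S0 < N := by
    rw [hS0def, div_lt_iff₀ hD]
    nlinarith
  have hNS0 : N - S0 = (p - 1) * N / D := by
    rw [hS0def]; field_simp; ring
  set f : ℝ → ℝ := fun S => S ^ q * (N - S) ^ (p - 1) with hfdef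
  -- continuity
  have hfc : Continuous f := by
    apply Continuous.mul
    · exact continuous_iff_continuousAt.2 fun x =>
        Real.continuousAt_rpow_const x q (Or.inr hq.le)
    · exact (continuous_iff_continuousAt.2 fun x =>
        Real.continuousAt_rpow_const x (p - 1) (Or.inr (by linarith))).comp
        (continuous_const.sub continuous_id)
  -- derivative
  have hderiv : ∀ x ∈ Set.Ioo (0:ℝ) N,
      HasDerivAt f (x ^ (q - 1) * (N - x) ^ (p - 1 - 1) * (q * N - D * x)) x := by
    intro x hx
    have hx0 : 0 < x := hx.1
    have hxN : 0 < N - x := sub_pos.2 hx.2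
    have h1 : HasDerivAt (fun x : ℝ => x ^ q) (q * x ^ (q - 1)) x :=
      Real.hasDerivAt_rpow_const (Or.inl hx0.ne')
    have h2' : HasDerivAt (fun x : ℝ => N - x) (-1) x := (hasDerivAt_id x).const_sub N
    have h2 : HasDerivAt (fun x : ℝ => (N - x) ^ (p - 1))
        ((p - 1) * (N - x) ^ (p - 1 - 1) * (-1)) x :=
      (Real.hasDerivAt_rpow_const (p := p - 1) (Or.inl hxN.ne')).comp x h2'
    have := h1.mul h2
    refine this.congr_deriv ?_
    have hxq : x ^ q = x ^ (q - 1) * x := by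
      rw [show q = q - 1 + 1 by ring, Real.rpow_add hx0, Real.rpow_one]; ring_nf
    have hxp : (N - x) ^ (p - 1) = (N - x) ^ (p - 1 - 1) * (N - x) := by
      rw [show p - 1 = p - 1 - 1 + 1 by ring, Real.rpow_add hxN, Real.rpow_one]; ring_nf
    rw [hxq, hxp]
    ring
  -- strict monotonicity on [0, S0]
  have hmono : StrictMonoOn f (Set.Icc 0 S0) := by
    apply strictMonoOn_of_deriv_pos (convex_Icc _ _) hfc.continuousOn
    intro x hx
    rw [interior_Icc] at hx
    have hxN : x ∈ Set.Ioo (0:ℝ) N := ⟨hx.1, hx.2.trans hS0lt⟩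
    rw [(hderiv x hxN).deriv]
    have h1 : 0 < x ^ (q - 1) := Real.rpow_pos_of_pos hx.1 _
    have h2 : 0 < (N - x) ^ (p - 1 - 1) := Real.rpow_pos_of_pos (sub_pos.2 hxN.2) _
    have h3 : 0 < q * N - D * x := by
      have := hx.2
      rw [hS0def, lt_div_iff₀ hD] at this
      nlinarith
    positivity
  -- strict antitonicity on [S0, N]
  have hanti : StrictAntiOn f (Set.Icc S0 N) := by
    apply strictAntiOn_of_deriv_neg (convex_Icc _ _) hfc.continuousOn
    intro x hx
    rw [interior_Icc] at hx
    have hxN : x ∈ Set.Ioo (0:ℝ) N := ⟨hS0pos.trans hx.1, hx.2⟩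
    rw [(hderiv x hxN).deriv]
    have h1 : 0 < x ^ (q - 1) := Real.rpow_pos_of_pos hxN.1 _
    have h2 : 0 < (N - x) ^ (p - 1 - 1) := Real.rpow_pos_of_pos (sub_pos.2 hxN.2) _
    have h3 : q * N - D * x < 0 := by
      have := hx.1
      rw [hS0def, div_lt_iff₀ hD] at this
      nlinarith
    exact mul_neg_of_pos_of_neg (mul_pos h1 h2) h3
  -- value at the peak
  have hfS0 : f S0 = Nstar := by
    have hqN : (0:ℝ) ≤ q * N := by positivity
    have hpN : (0:ℝ) ≤ (p - 1) * N := by nlinarith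
    simp only [hfdef, hNS0, hS0def]
    rw [show N - q * N / D = (p - 1) * N / D from hNS0]
    rw [Real.div_rpow hqN hD.le, Real.div_rpow hpN hD.le,
      Real.mul_rpow hq.le hN.le, Real.mul_rpow (by linarith : (0:ℝ) ≤ p - 1) hN.le]
    rw [hNstar]
    have hDsplit : q + (p - 1) = D := by rw [hDdef]; ring
    have hD2 : (0:ℝ) < q + (p - 1) := by linarith
    rw [← hDsplit, Real.rpow_add hN, Real.rpow_add hD2]
    field_simp
  -- f vanishes at endpoints
  have hf0 : f 0 = 0 := by
    simp only [hfdef]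
    rw [Real.zero_rpow hq.ne']
    ring
  have hfN : f N = 0 := by
    simp only [hfdef]
    rw [sub_self, Real.zero_rpow (by linarith : p - 1 ≠ 0)]
    ring
  -- maximum property
  have hmax : ∀ S ∈ Set.Ioo (0:ℝ) N, S ≠ S0 → f S < f S0 := by
    intro S hS hne
    rcases lt_or_gt_of_ne hne with h | h
    · exact hmono ⟨hS.1.le, h.le⟩ ⟨hS0pos.le, le_refl _⟩ h
    · exact hanti ⟨le_refl _, hS0lt.le⟩ ⟨h.le, hS.2.le⟩ h
  have hRmem : ∀ S, S ∈ R ↔ S ∈ Set.Ioo 0 N ∧ f S = γ / β := by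
    intro S
    rw [hR]
    simp only [Set.mem_setOf_eq, hfdef]
    constructor
    · rintro ⟨h1, h2⟩; exact ⟨h1, by rw [← h2]; field_simp⟩
    · rintro ⟨h1, h2⟩; exact ⟨h1, by rw [h2]; field_simp⟩
  refine ⟨?_, ?_, ?_⟩
  · -- γ < β * Nstar : two solutions
    intro hlt
    have hc : γ / β ∈ Set.Ioo (0:ℝ) (f S0) := by
      constructor
      · positivity
      · rw [hfS0, div_lt_iff₀ hβ]; linarith
    obtain ⟨S₁, hS₁mem, hS₁val⟩ := intermediate_value_Ioo hS0pos.le hfc.continuousOn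
      (by rw [hf0]; exact hc)
    obtain ⟨S₂, hS₂mem, hS₂val⟩ := intermediate_value_Ioo' hS0lt.le hfc.continuousOn
      (by rw [hfN]; exact hc)
    refine ⟨S₁, S₂, (hS₁mem.2.trans hS₂mem.1).ne, ?_⟩
    ext S
    rw [hRmem]
    constructor
    · rintro ⟨hS, hval⟩
      have hSne : S ≠ S0 := by
        intro h
        rw [h, hfS0] at hval
        rw [hfS0] at hc
        exact absurd hval.symm hc.2.ne
      rcases lt_or_gt_of_ne hSne with h | h
      · left
        exact hmono.injOn ⟨hS.1.le, h.le⟩ ⟨hS₁mem.1.le, hS₁mem.2.le⟩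
          (by rw [hval, hS₁val])
      · right
        exact hanti.injOn ⟨h.le, hS.2.le⟩ ⟨hS₂mem.1.le, hS₂mem.2.le⟩
          (by rw [hval, hS₂val])
    · rintro (rfl | rfl)
      · exact ⟨⟨hS₁mem.1, hS₁mem.2.trans hS0lt⟩, hS₁val⟩
      · exact ⟨⟨hS0pos.trans hS₂mem.1, hS₂mem.2⟩, hS₂val⟩
  · -- γ = β * Nstar : unique solution S0
    intro heq
    have hcS0 : f S0 = γ / β := by rw [hfS0, heq]; field_simp
    ext S
    rw [hRmem, Set.mem_singleton_iff]
    constructor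
    · rintro ⟨hS, hval⟩
      by_contra hne
      have := hmax S hS hne
      rw [hval, hcS0] at this
      exact lt_irrefl _ this
    · rintro rfl
      exact ⟨⟨hS0pos, hS0lt⟩, hcS0⟩
  · -- β * Nstar < γ : no solution
    intro hlt
    ext S
    rw [hRmem]
    simp only [Set.mem_empty_iff_false, iff_false, not_and]
    intro hS hval
    have hle : f S ≤ f S0 := by
      by_cases hne : S = S0
      · rw [hne]
      · exact (hmax S hS hne).le
    rw [hval, hfS0] at hle
    rw [div_le_iff₀ hβ] at hle
    linarith
end

section
/- Let 0 < p < 1, q > 0 and β, γ, N > 0 be real numbers. Then there exists exactly one S ∈ (0,N) with β·S^q·(N−S)^{p−1} = γ; moreover, the function S ↦ β·S^q·(N−S)^{p−1} is strictly increasing on (0,N). -/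
/-!
`S ↦ S^q (N - S)^(p-1)` is a product of two positive increasing functions on `(0, N)`, since
`q > 0` and `p - 1 < 0`. It is continuous there, tends to `0` as `S → 0⁺` and to `+∞` as
`S → N⁻`, so by the intermediate value theorem it takes every positive value, and by strict
monotonicity it takes each value exactly once.
-/

open Set Filter Topology

theorem ContinuousOn.Ioi_subset_image_Ioo {α δ : Type*} [ConditionallyCompleteLinearOrder α]
    [TopologicalSpace α] [OrderTopology α] [DenselyOrdered α] [LinearOrder δ] [TopologicalSpace δ]
    [OrderClosedTopology δ] {a b : α} {v : δ} {f : α → δ} (hab : a < b)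
    (hf : ContinuousOn f (Ioo a b)) (ha : Tendsto f (𝓝[>] a) (𝓝 v))
    (hb : Tendsto f (𝓝[<] b) atTop) : Ioi v ⊆ f '' Ioo a b := by
  have := left_nhdsWithin_Ioo_neBot hab
  have := right_nhdsWithin_Ioo_neBot hab
  refine isPreconnected_Ioo.intermediate_value_Ioi (l₁ := 𝓝[Ioo a b] a) (l₂ := 𝓝[Ioo a b] b)
    inf_le_right inf_le_right hf ?_ ?_
  · rwa [nhdsWithin_Ioo_eq_nhdsGT hab]
  · rwa [nhdsWithin_Ioo_eq_nhdsLT hab]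

section
variable {q r N : ℝ}

theorem strictMonoOn_rpow_mul_sub_rpow (hq : 0 < q) (hr : r < 0) :
    StrictMonoOn (fun S : ℝ => S ^ q * (N - S) ^ r) (Ioo 0 N) := by
  intro x hx y hy hxy
  have hx' : 0 < N - x := sub_pos.2 hx.2
  have hy' : 0 < N - y := sub_pos.2 hy.2
  exact mul_lt_mul'' (Real.rpow_lt_rpow hx.1.le hxy hq)
    (Real.rpow_lt_rpow_of_neg hy' (by linarith) hr)
    (Real.rpow_nonneg hx.1.le q) (Real.rpow_nonneg hx'.le r)

theorem continuousOn_rpow_mul_sub_rpow :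
    ContinuousOn (fun S : ℝ => S ^ q * (N - S) ^ r) (Ioo 0 N) := by
  refine ContinuousOn.mul ?_ ?_
  · exact continuousOn_id.rpow_const fun x hx => Or.inl hx.1.ne'
  · exact (continuousOn_const.sub continuousOn_id).rpow_const fun x hx =>
      Or.inl (sub_pos.2 hx.2).ne'

theorem tendsto_rpow_mul_sub_rpow_zero (hq : 0 < q) (hN : N ≠ 0) :
    Tendsto (fun S : ℝ => S ^ q * (N - S) ^ r) (𝓝 0) (𝓝 0) := by
  have hcont : ContinuousAt (fun S : ℝ => S ^ q * (N - S) ^ r) 0 := by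
    apply ContinuousAt.mul
    · exact Real.continuousAt_rpow_const 0 q (Or.inr hq.le)
    · exact (continuousAt_const.sub continuousAt_id).rpow_const (Or.inl (by simpa using hN))
  simpa [Real.zero_rpow hq.ne'] using hcont.tendsto

theorem tendsto_rpow_mul_sub_rpow_nhdsLT (hN : 0 < N) (hr : r < 0) :
    Tendsto (fun S : ℝ => S ^ q * (N - S) ^ r) (𝓝[<] N) atTop := by
  have hsub : Tendsto (fun S : ℝ => N - S) (𝓝[<] N) (𝓝[>] 0) := by
    refine tendsto_nhdsWithin_of_tendsto_nhds_of_eventually_within _ ?_ ?_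
    · have : Tendsto (fun S : ℝ => N - S) (𝓝 N) (𝓝 (N - N)) := tendsto_const_nhds.sub tendsto_id
      simpa using this.mono_left nhdsWithin_le_nhds
    · filter_upwards [self_mem_nhdsWithin] with S (hS : S < N) using sub_pos.2 hS
  have hpow : Tendsto (fun S : ℝ => S ^ q) (𝓝[<] N) (𝓝 (N ^ q)) :=
    (Real.continuousAt_rpow_const N q (Or.inl hN.ne')).tendsto.mono_left nhdsWithin_le_nhds
  exact hpow.pos_mul_atTop (by positivity) ((tendsto_rpow_neg_nhdsGT_zero hr).comp hsub)

end

theorem stmt13_general (p q β γ N : ℝ) (hp1 : p < 1) (hq : 0 < q)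
    (hβ : 0 < β) (hγ : 0 < γ) (hN : 0 < N) :
    (∃! S : ℝ, S ∈ Set.Ioo 0 N ∧ β * (S ^ q * (N - S) ^ (p - 1)) = γ) ∧
    StrictMonoOn (fun S : ℝ => β * (S ^ q * (N - S) ^ (p - 1))) (Set.Ioo 0 N) := by
  set f : ℝ → ℝ := fun S => β * (S ^ q * (N - S) ^ (p - 1))
  have hr : p - 1 < 0 := sub_neg.2 hp1
  have hmono : StrictMonoOn f (Ioo 0 N) := fun x hx y hy hxy =>
    mul_lt_mul_of_pos_left (strictMonoOn_rpow_mul_sub_rpow hq hr hx hy hxy) hβ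
  have hzero : Tendsto f (𝓝[>] 0) (𝓝 0) := by
    simpa using ((tendsto_rpow_mul_sub_rpow_zero hq hN.ne').const_mul β).mono_left
      nhdsWithin_le_nhds
  have htop : Tendsto f (𝓝[<] N) atTop :=
    (tendsto_rpow_mul_sub_rpow_nhdsLT hN hr).const_mul_atTop hβ
  obtain ⟨S, hS, hSγ⟩ := ContinuousOn.Ioi_subset_image_Ioo hN
    (continuousOn_const.mul continuousOn_rpow_mul_sub_rpow) hzero htop (mem_Ioi.2 hγ)
  exact ⟨⟨S, ⟨hS, hSγ⟩, fun y hy => hmono.injOn hy.1 hS (hy.2.trans hSγ.symm)⟩, hmono⟩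

/-- Steady-state uniqueness in the case `0 < p < 1` of Proposition 8.2 of the paper:
for `0 < p < 1`, `q > 0` and `β, γ, N > 0` there is exactly one `S ∈ (0,N)` with
`β·S^q·(N−S)^{p−1} = γ`, and `S ↦ β·S^q·(N−S)^{p−1}` is strictly increasing on
`(0,N)`. -/
theorem stmt13 (p q β γ N : ℝ) (hp0 : 0 < p) (hp1 : p < 1) (hq : 0 < q)
    (hβ : 0 < β) (hγ : 0 < γ) (hN : 0 < N) :
    (∃! S : ℝ, S ∈ Set.Ioo 0 N ∧ β * (S ^ q * (N - S) ^ (p - 1)) = γ) ∧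
    StrictMonoOn (fun S : ℝ => β * (S ^ q * (N - S) ^ (p - 1))) (Set.Ioo 0 N) :=
  stmt13_general p q β γ N hp1 hq hβ hγ hN
end

section
/- Suppose γ < β·N^q. Then S(t) → (γ/β)^{1/q} as t → ∞. -/
open Filter Topology

/-- Barrier lemma: if the derivative field `F` is negative at level `c'` and the solution
starts below `c'`, it stays below `c'`. -/
lemma stmt14_stayBelow (S F : ℝ → ℝ) (c' t1 : ℝ)
    (hode : ∀ t, t1 ≤ t → HasDerivAt S (F (S t)) t)
    (hFc : F c' < 0) (h1 : S t1 < c') : ∀ t, t1 ≤ t → S t < c' := by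
  intro t2 ht2
  by_contra hcon
  push_neg at hcon
  have hScont : ContinuousOn S (Set.Icc t1 t2) := fun t ht =>
    ((hode t ht.1).continuousAt).continuousWithinAt
  set A : Set ℝ := Set.Icc t1 t2 ∩ S ⁻¹' Set.Ici c' with hA
  have hclosed : IsClosed A :=
    hScont.preimage_isClosed_of_isClosed isClosed_Icc isClosed_Ici
  have hne : A.Nonempty := ⟨t2, ⟨ht2, le_rfl⟩, hcon⟩
  have hbdd : BddBelow A := ⟨t1, fun t ht => ht.1.1⟩
  set s := sInf A with hs
  have hsA : s ∈ A := hclosed.csInf_mem hne hbdd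
  obtain ⟨⟨hst1, hst2⟩, hcs⟩ := hsA
  have hlt : t1 < s := by
    rcases eq_or_lt_of_le hst1 with hEq | hlt
    · exact absurd (hEq ▸ hcs) (not_le.2 h1)
    · exact hlt
  have hbelow : ∀ t, t1 ≤ t → t < s → S t < c' := by
    intro t ht hts
    by_contra hc2
    push_neg at hc2
    exact absurd (csInf_le hbdd ⟨⟨ht, hts.le.trans hst2⟩, hc2⟩) (not_le.2 hts)
  have hSs : S s = c' := by
    refine le_antisymm ?_ hcs
    have htend : Tendsto S (𝓝[<] s) (𝓝 (S s)) :=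
      ((hode s hst1).continuousAt.tendsto).mono_left nhdsWithin_le_nhds
    have hmem : Set.Ioo t1 s ∈ 𝓝[<] s := Ioo_mem_nhdsLT_of_mem ⟨hlt, le_rfl⟩
    refine le_of_tendsto htend ?_
    filter_upwards [hmem] with t ht
    exact (hbelow t ht.1.le ht.2).le
  have hd : HasDerivAt S (F c') s := by
    have := hode s hst1; rwa [hSs] at this
  have hslope : Tendsto (slope S s) (𝓝[<] s) (𝓝 (F c')) :=
    (hasDerivAt_iff_tendsto_slope.1 hd).mono_left
      (nhdsWithin_mono _ (fun x hx => ne_of_lt hx))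
  have hev : ∀ᶠ t in 𝓝[<] s, slope S s t < 0 := hslope.eventually_lt_const hFc
  have hmem : Set.Ioo t1 s ∈ 𝓝[<] s := Ioo_mem_nhdsLT_of_mem ⟨hlt, le_rfl⟩
  have hmem2 : ∀ᶠ t in 𝓝[<] s, t ∈ Set.Ioo t1 s :=
    Filter.eventually_of_mem hmem fun x hx => hx
  obtain ⟨t, hts, htio⟩ := (hev.and hmem2).exists
  have hnum : S t - S s < 0 := by
    have := hbelow t htio.1.le htio.2
    rw [hSs]; linarith
  have hden : t - s < 0 := by linarith [htio.2]
  have : 0 < slope S s t := by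
    rw [slope_def_field]
    exact div_pos_of_neg_of_neg hnum hden
  linarith

/-- Barrier lemma: if the derivative field `F` is positive at level `c'` and the solution
starts above `c'`, it stays above `c'`. -/
lemma stmt14_stayAbove (S F : ℝ → ℝ) (c' t1 : ℝ)
    (hode : ∀ t, t1 ≤ t → HasDerivAt S (F (S t)) t)
    (hFc : 0 < F c') (h1 : c' < S t1) : ∀ t, t1 ≤ t → c' < S t := by
  intro t ht
  have := stmt14_stayBelow (fun u => -S u) (fun x => -F (-x)) (-c') t1
    (fun u hu => by simp only [neg_neg]; exact (hode u hu).neg) (by simpa using hFc)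
    (by simpa using h1) t ht
  simpa using this

/-- Proposition 8.2 of the paper, case `p = 1`, `γ < β·N^q`: any solution of the
reduced scalar ODE `S' = −β·S^q·(N−S) + γ·(N−S)` with `S(t) ∈ (0,N)` converges to
`(γ/β)^{1/q}` as `t → ∞`. -/
theorem stmt14 (q β γ N : ℝ) (S : ℝ → ℝ)
    (hq : 0 < q) (hβ : 0 < β) (hγ : 0 < γ) (hN : 0 < N)
    (hScont : ContinuousOn S (Set.Ici 0))
    (hrange : ∀ t : ℝ, 0 ≤ t → S t ∈ Set.Ioo 0 N)
    (hSode : ∀ t : ℝ, 0 < t →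
      HasDerivAt S (-(β * S t ^ q * (N - S t)) + γ * (N - S t)) t)
    (h : γ < β * N ^ q) :
    Tendsto S atTop (𝓝 ((γ / β) ^ (1 / q))) := by
  obtain ⟨F, hFval⟩ : ∃ F : ℝ → ℝ, ∀ x, F x = (N - x) * (γ - β * x ^ q) :=
    ⟨fun x => (N - x) * (γ - β * x ^ q), fun x => rfl⟩
  obtain ⟨c, hc⟩ : ∃ c : ℝ, c = (γ / β) ^ (1 / q) := ⟨_, rfl⟩
  rw [← hc]
  have hq' : q ≠ 0 := hq.ne'
  have hγβ : 0 < γ / β := div_pos hγ hβ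
  have hc0 : 0 < c := hc ▸ Real.rpow_pos_of_pos hγβ _
  have hcq : c ^ q = γ / β := by
    rw [hc, one_div, Real.rpow_inv_rpow hγβ.le hq']
  have hcN : c < N := by
    have h1 : γ / β < N ^ q := (div_lt_iff₀ hβ).2 (by linarith)
    calc c = (γ / β) ^ (1 / q) := hc
      _ < (N ^ q) ^ (1 / q) := Real.rpow_lt_rpow hγβ.le h1 (by positivity)
      _ = N := by rw [one_div, Real.rpow_rpow_inv hN.le hq']
  have hode' : ∀ t : ℝ, 0 < t → HasDerivAt S (F (S t)) t := by
    intro t ht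
    have h2 := hSode t ht
    convert h2 using 1
    rw [hFval]; ring
  have hFneg : ∀ x, c < x → x < N → F x < 0 := by
    intro x hx hxN
    have hxq : c ^ q < x ^ q := Real.rpow_lt_rpow hc0.le hx hq
    rw [hcq] at hxq
    have h2 : γ - β * x ^ q < 0 := by
      have := (div_lt_iff₀ hβ).1 hxq
      linarith
    have h1 : 0 < N - x := by linarith
    rw [hFval]
    exact mul_neg_of_pos_of_neg h1 h2
  have hFpos : ∀ x, 0 ≤ x → x < c → x < N → 0 < F x := by
    intro x hx0 hx hxN
    have hxq : x ^ q < c ^ q := Real.rpow_lt_rpow hx0 hx hq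
    rw [hcq] at hxq
    have h2 : 0 < γ - β * x ^ q := by
      have := (lt_div_iff₀ hβ).1 hxq
      linarith
    have h1 : 0 < N - x := by linarith
    rw [hFval]
    exact mul_pos h1 h2
  rw [Metric.tendsto_atTop]
  intro ε hε
  obtain ⟨ε', hε'def⟩ : ∃ e : ℝ, e = min ε (min (c / 2) ((N - c) / 2)) := ⟨_, rfl⟩
  have hε'pos : 0 < ε' := by
    rw [hε'def]
    apply lt_min hε
    apply lt_min <;> linarith
  have hε'ε : ε' ≤ ε := hε'def ▸ min_le_left _ _
  have hε'c : ε' ≤ c / 2 := hε'def ▸ le_trans (min_le_right _ _) (min_le_left _ _)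
  have hε'N : ε' ≤ (N - c) / 2 := hε'def ▸ le_trans (min_le_right _ _) (min_le_right _ _)
  have hcm0 : 0 < c - ε' := by linarith
  have hcpN : c + ε' < N := by linarith
  -- Step 1: ∃ t1 ≥ 1, S t1 < c + ε'
  have step1 : ∃ t1, 1 ≤ t1 ∧ S t1 < c + ε' := by
    by_contra hcon
    push_neg at hcon
    have hup : ∀ t, 1 ≤ t → c + ε' ≤ S t := hcon
    have hanti : AntitoneOn S (Set.Ici 1) := by
      apply antitoneOn_of_deriv_nonpos (convex_Ici 1)
      · intro t ht
        exact ((hode' t (lt_of_lt_of_le one_pos ht)).continuousAt).continuousWithinAt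
      · rw [interior_Ici]
        intro t ht
        exact ((hode' t (lt_trans one_pos ht)).differentiableAt).differentiableWithinAt
      · rw [interior_Ici]
        intro t ht
        have ht0 : (0:ℝ) < t := lt_trans one_pos ht
        rw [(hode' t ht0).deriv]
        have h1 := hup t ht.le
        have h2 := (hrange t ht0.le).2
        exact (hFneg (S t) (by linarith) h2).le
    obtain ⟨M, hM⟩ : ∃ M : ℝ, M = S 1 := ⟨_, rfl⟩
    have hMN : M < N := hM ▸ (hrange 1 zero_le_one).2
    have hM0 : 0 < M := hM ▸ (hrange 1 zero_le_one).1
    obtain ⟨δ, hδ⟩ : ∃ d : ℝ, d = (N - M) * (β * (c + ε') ^ q - γ) := ⟨_, rfl⟩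
    have hcε'q : c ^ q < (c + ε') ^ q := Real.rpow_lt_rpow hc0.le (by linarith) hq
    rw [hcq] at hcε'q
    have hfac : 0 < β * (c + ε') ^ q - γ := by
      have := (div_lt_iff₀ hβ).1 hcε'q
      linarith
    have hδpos : 0 < δ := hδ ▸ mul_pos (by linarith) hfac
    have hkey : ∀ t, 1 ≤ t → F (S t) ≤ -δ := by
      intro t ht
      have ht0 : (0:ℝ) < t := lt_of_lt_of_le one_pos ht
      have hSle : S t ≤ M := hM ▸ hanti Set.self_mem_Ici ht ht
      have hSge : c + ε' ≤ S t := hup t ht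
      have hSN : S t < N := (hrange t ht0.le).2
      have h1 : N - M ≤ N - S t := by linarith
      have h2 : β * (c + ε') ^ q - γ ≤ β * S t ^ q - γ := by
        have h4 : (c + ε') ^ q ≤ S t ^ q :=
          Real.rpow_le_rpow (by linarith) hSge hq.le
        nlinarith
      have h3 : δ ≤ (N - S t) * (β * S t ^ q - γ) := by
        rw [hδ]
        apply mul_le_mul h1 h2 hfac.le (by linarith)
      have h5 : (N - S t) * (γ - β * S t ^ q) = -((N - S t) * (β * S t ^ q - γ)) := by ring
      rw [hFval, h5]
      linarith
    obtain ⟨g, hgval⟩ : ∃ g : ℝ → ℝ, ∀ t, g t = S t + δ * (t - 1) :=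
      ⟨fun t => S t + δ * (t - 1), fun t => rfl⟩
    have hgderiv : ∀ t, 0 < t → HasDerivAt g (F (S t) + δ) t := by
      intro t ht
      have h1 : HasDerivAt (fun t : ℝ => δ * (t - 1)) δ t := by
        simpa using ((hasDerivAt_id t).sub_const 1).const_mul δ
      have h2 := (hode' t ht).add h1
      have h3 : g = fun t => S t + δ * (t - 1) := funext hgval
      rw [h3]
      exact h2
    have hganti : AntitoneOn g (Set.Ici 1) := by
      apply antitoneOn_of_deriv_nonpos (convex_Ici 1)
      · intro t ht
        exact ((hgderiv t (lt_of_lt_of_le one_pos ht)).continuousAt).continuousWithinAt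
      · rw [interior_Ici]
        intro t ht
        exact ((hgderiv t (lt_trans one_pos ht)).differentiableAt).differentiableWithinAt
      · rw [interior_Ici]
        intro t ht
        rw [(hgderiv t (lt_trans one_pos ht)).deriv]
        have := hkey t ht.le
        linarith
    obtain ⟨T, hT⟩ : ∃ T : ℝ, T = 1 + (M + 1) / δ := ⟨_, rfl⟩
    have hdivpos : 0 < (M + 1) / δ := div_pos (by linarith) hδpos
    have hT1 : 1 ≤ T := by rw [hT]; linarith
    have hgT : g T ≤ g 1 := hganti Set.self_mem_Ici hT1 hT1
    have hg1 : g 1 = M := by rw [hgval, hM]; ring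
    have hgTval : g T = S T + (M + 1) := by
      rw [hgval, hT]
      have hne := hδpos.ne'
      field_simp
      ring
    have hST : S T ≤ -1 := by
      rw [hg1, hgTval] at hgT
      linarith
    have := (hrange T (by linarith)).1
    linarith
  obtain ⟨t1, ht1, hSt1⟩ := step1
  have hbelow : ∀ t, t1 ≤ t → S t < c + ε' := by
    apply stmt14_stayBelow S F (c + ε') t1
    · intro t ht
      exact hode' t (lt_of_lt_of_le one_pos (ht1.trans ht))
    · exact hFneg (c + ε') (by linarith) hcpN
    · exact hSt1
  -- Step 3: ∃ t2 ≥ 1, c - ε' < S t2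
  have step3 : ∃ t2, 1 ≤ t2 ∧ c - ε' < S t2 := by
    by_contra hcon
    push_neg at hcon
    have hdn : ∀ t, 1 ≤ t → S t ≤ c - ε' := hcon
    obtain ⟨δ', hδ'⟩ : ∃ d : ℝ, d = (N - (c - ε')) * (γ - β * (c - ε') ^ q) := ⟨_, rfl⟩
    have hcε'q : (c - ε') ^ q < c ^ q := Real.rpow_lt_rpow hcm0.le (by linarith) hq
    rw [hcq] at hcε'q
    have hfac : 0 < γ - β * (c - ε') ^ q := by
      have := (lt_div_iff₀ hβ).1 hcε'q
      linarith
    have hδ'pos : 0 < δ' := hδ' ▸ mul_pos (by linarith) hfac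
    have hkey : ∀ t, 1 ≤ t → δ' ≤ F (S t) := by
      intro t ht
      have ht0 : (0:ℝ) < t := lt_of_lt_of_le one_pos ht
      have hSle : S t ≤ c - ε' := hdn t ht
      have hS0 : 0 < S t := (hrange t ht0.le).1
      have h1 : N - (c - ε') ≤ N - S t := by linarith
      have h2 : γ - β * (c - ε') ^ q ≤ γ - β * S t ^ q := by
        have h4 : S t ^ q ≤ (c - ε') ^ q := Real.rpow_le_rpow hS0.le hSle hq.le
        nlinarith
      rw [hFval, hδ']
      apply mul_le_mul h1 h2 hfac.le (by linarith)
    obtain ⟨g, hgval⟩ : ∃ g : ℝ → ℝ, ∀ t, g t = S t - δ' * (t - 1) :=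
      ⟨fun t => S t - δ' * (t - 1), fun t => rfl⟩
    have hgderiv : ∀ t, 0 < t → HasDerivAt g (F (S t) - δ') t := by
      intro t ht
      have h1 : HasDerivAt (fun t : ℝ => δ' * (t - 1)) δ' t := by
        simpa using ((hasDerivAt_id t).sub_const 1).const_mul δ'
      have h2 := (hode' t ht).sub h1
      have h3 : g = fun t => S t - δ' * (t - 1) := funext hgval
      rw [h3]
      exact h2
    have hgmono : MonotoneOn g (Set.Ici 1) := by
      apply monotoneOn_of_deriv_nonneg (convex_Ici 1)
      · intro t ht
        exact ((hgderiv t (lt_of_lt_of_le one_pos ht)).continuousAt).continuousWithinAt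
      · rw [interior_Ici]
        intro t ht
        exact ((hgderiv t (lt_trans one_pos ht)).differentiableAt).differentiableWithinAt
      · rw [interior_Ici]
        intro t ht
        rw [(hgderiv t (lt_trans one_pos ht)).deriv]
        have := hkey t ht.le
        linarith
    obtain ⟨T, hT⟩ : ∃ T : ℝ, T = 1 + (N + 1) / δ' := ⟨_, rfl⟩
    have hdivpos : 0 < (N + 1) / δ' := div_pos (by linarith) hδ'pos
    have hT1 : 1 ≤ T := by rw [hT]; linarith
    have hgT : g 1 ≤ g T := hgmono Set.self_mem_Ici hT1 hT1
    have hg1 : g 1 = S 1 := by rw [hgval]; ring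
    have hgTval : g T = S T - (N + 1) := by
      rw [hgval, hT]
      have hne := hδ'pos.ne'
      field_simp
      ring
    have hS1 : 0 < S 1 := (hrange 1 zero_le_one).1
    have hST : N + 1 < S T := by
      rw [hg1, hgTval] at hgT
      linarith
    have := (hrange T (by linarith)).2
    linarith
  obtain ⟨t2, ht2, hSt2⟩ := step3
  have habove : ∀ t, t2 ≤ t → c - ε' < S t := by
    apply stmt14_stayAbove S F (c - ε') t2
    · intro t ht
      exact hode' t (lt_of_lt_of_le one_pos (ht2.trans ht))
    · exact hFpos (c - ε') hcm0.le (by linarith) (by linarith)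
    · exact hSt2
  refine ⟨max t1 t2, fun t ht => ?_⟩
  have h1 := hbelow t ((le_max_left t1 t2).trans ht)
  have h2 := habove t ((le_max_right t1 t2).trans ht)
  rw [Real.dist_eq, abs_lt]
  constructor <;> linarith
end

section
/- Suppose γ > β·N^q. Then S(t) → N as t → ∞. -/
/-!
`u = N - S` satisfies `u' = -(γ - β S^q) u ≤ -(γ - β N^q) u`, since `S^q ≤ N^q`.
With `c = γ - β N^q > 0`, the function `u(t) e^{ct}` is therefore nonincreasing, so
`0 < u(t) ≤ u(0) e^{-ct} → 0`.
-/

open Filter Topology Set Real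

section LinearDecay

variable {u u' : ℝ → ℝ} {a c : ℝ}

theorem antitoneOn_mul_exp_of_hasDerivAt_le_neg_mul (hcont : ContinuousOn u (Ici a))
    (hderiv : ∀ t, a < t → HasDerivAt u (u' t) t) (hle : ∀ t, a < t → u' t ≤ -c * u t) :
    AntitoneOn (fun t => u t * exp (c * t)) (Ici a) := by
  have hexp : ∀ t, HasDerivAt (fun t => exp (c * t)) (exp (c * t) * c) t := fun t => by
    simpa using ((hasDerivAt_id t).const_mul c).exp
  refine antitoneOn_of_hasDerivWithinAt_nonpos (convex_Ici a)
    (hcont.mul (continuous_exp.comp (continuous_const_mul c)).continuousOn)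
    (fun t ht => ((hderiv t ?_).mul (hexp t)).hasDerivWithinAt) (fun t ht => ?_)
  · simpa using ht
  · rw [interior_Ici, mem_Ioi] at ht
    have : 0 < exp (c * t) := exp_pos _
    nlinarith [hle t ht]

theorem le_mul_exp_of_hasDerivAt_le_neg_mul (hcont : ContinuousOn u (Ici a))
    (hderiv : ∀ t, a < t → HasDerivAt u (u' t) t) (hle : ∀ t, a < t → u' t ≤ -c * u t)
    {t : ℝ} (ht : a ≤ t) : u t ≤ u a * exp (-(c * (t - a))) := by
  have hmono := antitoneOn_mul_exp_of_hasDerivAt_le_neg_mul hcont hderiv hle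
    self_mem_Ici (mem_Ici.2 ht) ht
  rw [mul_sub, neg_sub, exp_sub, mul_div_assoc', le_div_iff₀ (exp_pos _)]
  exact hmono

theorem tendsto_zero_of_hasDerivAt_le_neg_mul (hc : 0 < c) (hcont : ContinuousOn u (Ici a))
    (hderiv : ∀ t, a < t → HasDerivAt u (u' t) t) (hle : ∀ t, a < t → u' t ≤ -c * u t)
    (hnonneg : ∀ t, a ≤ t → 0 ≤ u t) : Tendsto u atTop (𝓝 0) := by
  have hbound : Tendsto (fun t => u a * exp (-(c * (t - a)))) atTop (𝓝 0) := by
    have hlin : Tendsto (fun t => c * (t - a)) atTop atTop :=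
      (tendsto_atTop_add_const_right _ (-a) tendsto_id).const_mul_atTop hc
    simpa using (tendsto_exp_neg_atTop_nhds_zero.comp hlin).const_mul (u a)
  refine tendsto_of_tendsto_of_tendsto_of_le_of_le' tendsto_const_nhds hbound ?_ ?_
  · filter_upwards [eventually_ge_atTop a] with t ht using hnonneg t ht
  · filter_upwards [eventually_ge_atTop a] with t ht
      using le_mul_exp_of_hasDerivAt_le_neg_mul hcont hderiv hle ht

end LinearDecay

theorem neg_sis_rhs_le {q β γ N s : ℝ} (hq : 0 ≤ q) (hβ : 0 ≤ β) (hs : s ∈ Icc 0 N) :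
    -(-(β * s ^ q * (N - s)) + γ * (N - s)) ≤ -(γ - β * N ^ q) * (N - s) := by
  have hpow : β * s ^ q ≤ β * N ^ q :=
    mul_le_mul_of_nonneg_left (rpow_le_rpow hs.1 hs.2 hq) hβ
  nlinarith [sub_nonneg.2 hs.2]

theorem stmt15_general (q β γ N : ℝ) (S : ℝ → ℝ)
    (hq : 0 < q) (hβ : 0 < β)
    (hScont : ContinuousOn S (Set.Ici 0))
    (hrange : ∀ t : ℝ, 0 ≤ t → S t ∈ Set.Ioo 0 N)
    (hSode : ∀ t : ℝ, 0 < t →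
      HasDerivAt S (-(β * S t ^ q * (N - S t)) + γ * (N - S t)) t)
    (h : β * N ^ q < γ) :
    Tendsto S atTop (𝓝 N) := by
  have hgap : Tendsto (fun t => N - S t) atTop (𝓝 0) :=
    tendsto_zero_of_hasDerivAt_le_neg_mul (sub_pos.2 h) (continuousOn_const.sub hScont)
      (fun t ht => (hSode t ht).const_sub N)
      (fun t ht => neg_sis_rhs_le hq.le hβ.le (Ioo_subset_Icc_self (hrange t ht.le)))
      (fun t ht => sub_nonneg.2 (hrange t ht).2.le)
  simpa using (tendsto_const_nhds (x := N)).sub hgap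

/-- Proposition 8.2 of the paper, case `p = 1`, `γ > β·N^q`: any solution of the
reduced scalar ODE `S' = −β·S^q·(N−S) + γ·(N−S)` with `S(t) ∈ (0,N)` converges to `N`
as `t → ∞` (the disease dies out). -/
theorem stmt15 (q β γ N : ℝ) (S : ℝ → ℝ)
    (hq : 0 < q) (hβ : 0 < β) (hγ : 0 < γ) (hN : 0 < N)
    (hScont : ContinuousOn S (Set.Ici 0))
    (hrange : ∀ t : ℝ, 0 ≤ t → S t ∈ Set.Ioo 0 N)
    (hSode : ∀ t : ℝ, 0 < t →
      HasDerivAt S (-(β * S t ^ q * (N - S t)) + γ * (N - S t)) t)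
    (h : β * N ^ q < γ) :
    Tendsto S atTop (𝓝 N) :=
  stmt15_general q β γ N S hq hβ hScont hrange hSode h
end
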